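/- arXiv:2012.07364 — 6 statements merged into one kernel-verified Lean document; each statement's English description precedes it below -/
import Mathlib

section
/- Let α̃ be a real number that is not an integer and let Γ denote the real Gamma function. For all natural numbers k ≤ n one has Σ_{i=k}^{n} [(−1)^{n−i} · Γ(α̃+1)/((n−i)! · Γ(α̃ − n + i + 1))] · [(−1)^{i−k} · Γ(−α̃+1)/((i−k)! · Γ(−α̃ − i + k + 1))] = 1 if n = k and = 0 if k < n. Equivalently, the lower-triangular matrices Δ^{α̃} and Δ^{−α̃}, with entries (Δ^{±α̃})(n,k) = (−1)^{n−k} · Γ(±α̃+1)/((n−k)! · Γ(±α̃ − n + k + 1)) for k ≤ n and 0 for k > n, are mutually inverse. -/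
/-!
Writing `Γ(α + 1) = α (α - 1) ⋯ (α - m + 1) · Γ(α - m + 1)` turns the entry
`Γ(α + 1) / (m! Γ(α - m + 1))` into the generalized binomial coefficient `(α choose m)`, so
`(Δ^α)(n, k) = (-1)^(n-k) (α choose (n - k))`. The signs of a product of two entries multiply
to `(-1)^(n-k)`, and the remaining sum is the Chu–Vandermonde convolution
`∑ (α choose a) (-α choose b) = (α + (-α) choose (n - k)) = (0 choose (n - k))`.
-/

open Finset Polynomial

namespace Real

theorem Gamma_add_one_eq_descPochhammer_smeval_mul (α : ℝ) (m : ℕ)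
    (hα : ∀ j : ℕ, j < m → α ≠ j) :
    Gamma (α + 1) = (descPochhammer ℤ m).smeval α * Gamma (α - m + 1) := by
  induction m with
  | zero => simp
  | succ m ih =>
    have hstep : Gamma (α - m + 1) = (α - m) * Gamma (α - (m + 1 : ℕ) + 1) := by
      rw [show α - (m + 1 : ℕ) + 1 = α - m by push_cast; ring]
      exact Gamma_add_one (sub_ne_zero.mpr (hα m m.lt_succ_self))
    rw [ih fun j hj => hα j (hj.trans m.lt_succ_self), hstep, descPochhammer_succ_right]
    simp only [smeval_mul, smeval_sub, smeval_X, smeval_natCast, npow_one, npow_zero,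
      nsmul_eq_mul, mul_one]
    ring

theorem Gamma_div_factorial_mul_Gamma_eq_choose (α : ℝ) (m : ℕ)
    (hα : Gamma (α - m + 1) ≠ 0) :
    Gamma (α + 1) / (m.factorial * Gamma (α - m + 1)) = Ring.choose α m := by
  have hα_nat : ∀ j : ℕ, j < m → α ≠ j := by
    rintro j hj rfl
    refine hα ((Gamma_eq_zero_iff _).mpr ⟨m - 1 - j, ?_⟩)
    rw [Nat.cast_sub (by omega), Nat.cast_sub (by omega)]
    ring
  rw [Gamma_add_one_eq_descPochhammer_smeval_mul α m hα_nat,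
    Ring.descPochhammer_eq_factorial_smul_choose, nsmul_eq_mul]
  field_simp

end Real

theorem Finset.sum_Icc_sub_eq_sum_antidiagonal {M : Type*} [AddCommMonoid M] (f : ℕ → ℕ → M)
    {k n : ℕ} (hkn : k ≤ n) :
    ∑ i ∈ Icc k n, f (n - i) (i - k) = ∑ ij ∈ antidiagonal (n - k), f ij.1 ij.2 := by
  refine sum_nbij' (fun i => (n - i, i - k)) (fun ij => k + ij.2) ?_ ?_ ?_ ?_ fun _ _ => rfl <;>
    simp only [mem_Icc, HasAntidiagonal.mem_antidiagonal, Prod.forall, Prod.mk.injEq] <;>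
    omega

theorem Ring.sum_antidiagonal_choose_mul_choose_neg {R : Type*} [Ring R] [BinomialRing R]
    (r : R) (m : ℕ) :
    ∑ ij ∈ antidiagonal m, choose r ij.1 * choose (-r) ij.2 = if m = 0 then 1 else 0 := by
  rw [← add_choose_eq m ((Commute.refl r).neg_right), add_neg_cancel, choose_zero_ite]

theorem forall_neg_ne_intCast {α : ℝ} (hα : ∀ m : ℤ, α ≠ m) : ∀ m : ℤ, -α ≠ m :=
  fun m h => hα (-m) (by push_cast; linarith)

theorem Real.Gamma_sub_natCast_add_one_ne_zero {α : ℝ} (hα : ∀ m : ℤ, α ≠ m) (m : ℕ) :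
    Gamma (α - m + 1) ≠ 0 :=
  Gamma_ne_zero fun j h => hα (m - 1 - j) (by push_cast; linarith)

/-- `(Δ^α)(n, k)`; only meaningful for `k ≤ n`, since `n - k` truncates. -/
noncomputable def fractionalDifferenceEntry (α : ℝ) (n k : ℕ) : ℝ :=
  (-1 : ℝ) ^ (n - k) *
    (Real.Gamma (α + 1) /
      ((Nat.factorial (n - k) : ℝ) * Real.Gamma (α - (n : ℝ) + (k : ℝ) + 1)))

theorem fractionalDifferenceEntry_eq_choose {α : ℝ} (hα : ∀ m : ℤ, α ≠ m) {n k : ℕ}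
    (hkn : k ≤ n) :
    fractionalDifferenceEntry α n k = (-1) ^ (n - k) * Ring.choose α (n - k) := by
  have harg : α - (n : ℝ) + (k : ℝ) + 1 = α - ((n - k : ℕ) : ℝ) + 1 := by
    rw [Nat.cast_sub hkn]; ring
  rw [fractionalDifferenceEntry, harg,
    Real.Gamma_div_factorial_mul_Gamma_eq_choose _ _ (Real.Gamma_sub_natCast_add_one_ne_zero hα _)]

theorem sum_fractionalDifferenceEntry_mul_neg {α : ℝ} (hα : ∀ m : ℤ, α ≠ m) {n k : ℕ}
    (hkn : k ≤ n) :
    ∑ i ∈ Icc k n, fractionalDifferenceEntry α n i * fractionalDifferenceEntry (-α) i k =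
      if n = k then 1 else 0 := by
  have hterm : ∀ i ∈ Icc k n,
      fractionalDifferenceEntry α n i * fractionalDifferenceEntry (-α) i k =
        (-1) ^ (n - k) * (Ring.choose α (n - i) * Ring.choose (-α) (i - k)) := by
    intro i hi
    rw [mem_Icc] at hi
    rw [fractionalDifferenceEntry_eq_choose hα hi.2,
      fractionalDifferenceEntry_eq_choose (forall_neg_ne_intCast hα) hi.1,
      show n - k = (n - i) + (i - k) by omega, pow_add]
    ring
  rw [sum_congr rfl hterm, ← mul_sum,
    sum_Icc_sub_eq_sum_antidiagonal (fun a b => Ring.choose α a * Ring.choose (-α) b) hkn,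
    Ring.sum_antidiagonal_choose_mul_choose_neg]
  obtain rfl | hne := eq_or_ne n k
  · simp
  · simp [hne, show n - k ≠ 0 by omega]

/-- For a real number α̃ that is not an integer, the lower-triangular
matrices `Δ^{α̃}` and `Δ^{−α̃}`, with entries
`(Δ^{±α̃})(n,k) = (−1)^{n−k} · Γ(±α̃+1)/((n−k)! · Γ(±α̃ − n + k + 1))` for `k ≤ n`
(and `0` for `k > n`), are mutually inverse: for all `k ≤ n`,
`Σ_{i=k}^{n} (Δ^{α̃})(n,i) · (Δ^{−α̃})(i,k) = δ_{n,k}` and likewise with the two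
factors interchanged. -/
theorem fractional_difference_matrix_mutually_inverse
    (α : ℝ) (hα : ∀ m : ℤ, α ≠ (m : ℝ)) :
    ∀ n k : ℕ, k ≤ n →
      ((∑ i ∈ Finset.Icc k n,
          ((-1 : ℝ) ^ (n - i) *
              (Real.Gamma (α + 1) /
                ((Nat.factorial (n - i) : ℝ) * Real.Gamma (α - (n : ℝ) + (i : ℝ) + 1)))) *
            ((-1 : ℝ) ^ (i - k) *
              (Real.Gamma (-α + 1) /
                ((Nat.factorial (i - k) : ℝ) * Real.Gamma (-α - (i : ℝ) + (k : ℝ) + 1)))))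
          = if n = k then 1 else 0) ∧
      ((∑ i ∈ Finset.Icc k n,
          ((-1 : ℝ) ^ (n - i) *
              (Real.Gamma (-α + 1) /
                ((Nat.factorial (n - i) : ℝ) * Real.Gamma (-α - (n : ℝ) + (i : ℝ) + 1)))) *
            ((-1 : ℝ) ^ (i - k) *
              (Real.Gamma (α + 1) /
                ((Nat.factorial (i - k) : ℝ) * Real.Gamma (α - (i : ℝ) + (k : ℝ) + 1)))))
          = if n = k then 1 else 0) := by
  intro n k hkn
  refine ⟨sum_fractionalDifferenceEntry_mul_neg hα hkn, ?_⟩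
  have h := sum_fractionalDifferenceEntry_mul_neg (forall_neg_ne_intCast hα) hkn
  rw [neg_neg] at h
  exact h
end

section
/- The quantity ‖x‖ := sup_n |(Ax)_n| defines a norm on the set X∞ = {x : ℕ → ℝ | sup_n |(Ax)_n| < ∞}: in particular, if (Ax)_n = 0 for all n then x_n = 0 for all n. Moreover X∞ is complete for this norm: for every sequence (x^{(m)})_{m∈ℕ} of elements of X∞ that is Cauchy with respect to the distance d(x, x') = sup_n |(A(x − x'))_n|, there exists x ∈ X∞ with sup_n |(A(x^{(m)} − x))_n| → 0 as m → ∞. Furthermore, the subsets {x : (Ax)_n → 0 as n → ∞} and {x : lim_n (Ax)_n exists} are closed in X∞ for this distance, hence are themselves complete. -/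
open Filter Topology

/-- `λ_{k−1}` with the convention `λ_{−1} := 0`. -/
noncomputable def lamPrev (lam : ℕ → ℝ) (k : ℕ) : ℝ := if k = 0 then 0 else lam (k - 1)

/-- Entries of the product matrix `A = Λ(B^{r,s}(Δ^{α̃}))`:
`A(n,k) = Σ_{i=k}^{n} ((λ_i − λ_{i−1})/λ_n)·(1/(s+r)^n)·C(n,i)·s^{n−i}·r^{i}·
(−1)^{i−k}·Γ(α̃+1)/((i−k)!·Γ(α̃−i+k+1))` for `k ≤ n` and `0` for `k > n`
(the `Finset.Icc k n` sum is empty when `k > n`). -/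
noncomputable def Amat (r s α : ℝ) (lam : ℕ → ℝ) (n k : ℕ) : ℝ :=
  ∑ i ∈ Finset.Icc k n,
    ((lam i - lamPrev lam i) / lam n) * (1 / (s + r) ^ n) * (n.choose i : ℝ) *
      s ^ (n - i) * r ^ i * (-1 : ℝ) ^ (i - k) *
      (Real.Gamma (α + 1) /
        ((Nat.factorial (i - k) : ℝ) * Real.Gamma (α - (i : ℝ) + (k : ℝ) + 1)))

/-- The `A`-transform of a real sequence `x`: `(Ax)_n = Σ_{k=0}^{n} A(n,k)·x_k`. -/
noncomputable def Atr (r s α : ℝ) (lam : ℕ → ℝ) (x : ℕ → ℝ) (n : ℕ) : ℝ :=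
  ∑ k ∈ Finset.range (n + 1), Amat r s α lam n k * x k

/-!
The matrix `A` is lower triangular with diagonal entries
`A(n,n) = ((λ_n − λ_{n−1})/λ_n) · r^n/(s+r)^n ≠ 0`, so forward substitution makes `x ↦ Ax` a
linear bijection of `ℝ^ℕ`. Through it, `X∞` with `d` is isometric to `ℓ∞` with the sup distance,
and every claim becomes a fact about uniform convergence of real sequences: uniform Cauchy
sequences of bounded sequences have bounded uniform limits, and uniform limits of null
(resp. convergent) sequences are null (resp. convergent).
-/

section TriangularTransform

variable {K : Type*}

def triangularTransform [Ring K] (a : ℕ → ℕ → K) (x : ℕ → K) (n : ℕ) : K :=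
  ∑ k ∈ Finset.range (n + 1), a n k * x k

theorem triangularTransform_sub [Ring K] (a : ℕ → ℕ → K) (x y : ℕ → K) (n : ℕ) :
    triangularTransform a (fun j => x j - y j) n =
      triangularTransform a x n - triangularTransform a y n := by
  simp only [triangularTransform, mul_sub, Finset.sum_sub_distrib]

theorem triangularTransform_injective [Ring K] [NoZeroDivisors K] {a : ℕ → ℕ → K}
    (hdiag : ∀ n, a n n ≠ 0) : Function.Injective (triangularTransform a) := by
  intro x y hxy
  funext n
  induction n using Nat.strong_induction_on with
  | _ n ih =>
    have hn := congrFun hxy n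
    have hlower : ∑ k ∈ Finset.range n, a n k * x k = ∑ k ∈ Finset.range n, a n k * y k :=
      Finset.sum_congr rfl fun k hk => by rw [ih k (Finset.mem_range.mp hk)]
    rw [triangularTransform, triangularTransform, Finset.sum_range_succ, Finset.sum_range_succ,
      hlower, add_left_cancel_iff] at hn
    exact mul_left_cancel₀ (hdiag n) hn

def forwardSubst [DivisionRing K] (a : ℕ → ℕ → K) (w : ℕ → K) : ℕ → K
  | n => (a n n)⁻¹ * (w n - ∑ k ∈ (Finset.range n).attach, a n k.1 * forwardSubst a w k.1)
  decreasing_by exact Finset.mem_range.mp k.2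

theorem triangularTransform_forwardSubst [DivisionRing K] {a : ℕ → ℕ → K}
    (hdiag : ∀ n, a n n ≠ 0) (w : ℕ → K) : triangularTransform a (forwardSubst a w) = w := by
  funext n
  rw [triangularTransform, Finset.sum_range_succ, forwardSubst,
    Finset.sum_attach (Finset.range n) fun k => a n k * forwardSubst a w k,
    mul_inv_cancel_left₀ (hdiag n), add_sub_cancel]

theorem triangularTransform_surjective [DivisionRing K] {a : ℕ → ℕ → K}
    (hdiag : ∀ n, a n n ≠ 0) : Function.Surjective (triangularTransform a) :=
  fun w => ⟨forwardSubst a w, triangularTransform_forwardSubst hdiag w⟩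

end TriangularTransform

section UniformLimits

variable {β : Type*}

theorem tendstoUniformly_atTop_iff_norm_sub_lt {E : Type*} [SeminormedAddCommGroup E]
    {F : ℕ → β → E} {f : β → E} :
    TendstoUniformly F f atTop ↔ ∀ ε > (0 : ℝ), ∃ N, ∀ m ≥ N, ∀ n, ‖F m n - f n‖ < ε := by
  simp only [Metric.tendstoUniformly_iff, eventually_atTop, dist_eq_norm, norm_sub_rev]

theorem uniformCauchySeqOn_univ_iff_norm_sub_lt {E : Type*} [SeminormedAddCommGroup E]
    {F : ℕ → β → E} :
    UniformCauchySeqOn F atTop Set.univ ↔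
      ∀ ε > (0 : ℝ), ∃ N, ∀ p ≥ N, ∀ q ≥ N, ∀ n, ‖F p n - F q n‖ < ε := by
  simp only [Metric.uniformCauchySeqOn_iff, Set.mem_univ, forall_const, dist_eq_norm]

theorem UniformCauchySeqOn.exists_tendstoUniformly {α : Type*} [UniformSpace α] [CompleteSpace α]
    {F : ℕ → β → α} (hF : UniformCauchySeqOn F atTop Set.univ) :
    ∃ f, TendstoUniformly F f atTop := by
  choose f hf using fun x => cauchySeq_tendsto_of_complete (hF.cauchySeq (Set.mem_univ x))
  exact ⟨f, tendstoUniformlyOn_univ.mp (hF.tendstoUniformlyOn_of_tendsto fun x _ => hf x)⟩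

theorem TendstoUniformly.exists_norm_le {ι E : Type*} [SeminormedAddCommGroup E]
    {F : ι → β → E} {f : β → E} {p : Filter ι} [p.NeBot] (hF : TendstoUniformly F f p)
    (hbdd : ∀ i, ∃ M, ∀ x, ‖F i x‖ ≤ M) : ∃ M, ∀ x, ‖f x‖ ≤ M := by
  obtain ⟨i, hi⟩ := (Metric.tendstoUniformly_iff.mp hF 1 one_pos).exists
  obtain ⟨M, hM⟩ := hbdd i
  refine ⟨M + 1, fun x => ?_⟩
  calc ‖f x‖ ≤ ‖F i x‖ + dist (f x) (F i x) := by
        rw [dist_eq_norm]; exact norm_le_insert' _ _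
    _ ≤ M + 1 := add_le_add (hM x) (hi x).le

theorem TendstoUniformly.cauchySeq {ι α : Type*} [PseudoMetricSpace α] {F : ι → ℕ → α}
    {f : ℕ → α} {p : Filter ι} [p.NeBot] (hF : TendstoUniformly F f p)
    (hcauchy : ∀ i, CauchySeq (F i)) : CauchySeq f := by
  rw [Metric.cauchySeq_iff]
  intro ε hε
  obtain ⟨i, hi⟩ := (Metric.tendstoUniformly_iff.mp hF (ε / 3) (by positivity)).exists
  obtain ⟨N, hN⟩ := Metric.cauchySeq_iff.mp (hcauchy i) (ε / 3) (by positivity)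
  refine ⟨N, fun m hm n hn => ?_⟩
  calc dist (f m) (f n) ≤ dist (f m) (F i m) + dist (F i m) (F i n) + dist (F i n) (f n) :=
        dist_triangle4 _ _ _ _
    _ < ε / 3 + ε / 3 + ε / 3 := by
        gcongr
        · exact hi m
        · exact hN m hm n hn
        · rw [dist_comm]; exact hi n
    _ = ε := by ring

end UniformLimits

theorem lamPrev_lt_self {lam : ℕ → ℝ} (hlam0 : 0 < lam 0) (hmono : StrictMono lam) (n : ℕ) :
    lamPrev lam n < lam n := by
  cases n with
  | zero => simpa [lamPrev] using hlam0
  | succ m => simpa [lamPrev] using hmono (Nat.lt_succ_self m)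

theorem Amat_self (r s α : ℝ) (lam : ℕ → ℝ) (hΓ : Real.Gamma (α + 1) ≠ 0) (n : ℕ) :
    Amat r s α lam n n = (lam n - lamPrev lam n) / lam n * (1 / (s + r) ^ n) * r ^ n := by
  simp [Amat, div_self hΓ]

theorem Amat_self_ne_zero {r s α : ℝ} {lam : ℕ → ℝ} (hr : r ≠ 0) (hsr : s + r ≠ 0)
    (hα : 0 < α) (hlam0 : 0 < lam 0) (hmono : StrictMono lam) (n : ℕ) :
    Amat r s α lam n n ≠ 0 := by
  have hlam_pos : 0 < lam n := hlam0.trans_le (hmono.monotone n.zero_le)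
  rw [Amat_self r s α lam (Real.Gamma_pos_of_pos (by linarith)).ne']
  have hgap := sub_pos.mpr (lamPrev_lt_self hlam0 hmono n)
  positivity

theorem Atr_eq_triangularTransform (r s α : ℝ) (lam : ℕ → ℝ) :
    Atr r s α lam = triangularTransform (Amat r s α lam) := rfl

theorem binomial_space_BK_general (r s α : ℝ) (lam : ℕ → ℝ)
    (hr : r ≠ 0) (hsr : s + r ≠ 0) (hα : 0 < α)
    (hlam0 : 0 < lam 0) (hmono : StrictMono lam) :
    -- the norm separates points: `Ax = 0` implies `x = 0`
    (∀ x : ℕ → ℝ, (∀ n, Atr r s α lam x n = 0) → ∀ n, x n = 0) ∧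
    -- completeness of `X∞` for the distance `d(x,x') = sup_n |(A(x−x'))_n|`
    (∀ x : ℕ → (ℕ → ℝ),
      (∀ m, ∃ M : ℝ, ∀ n, |Atr r s α lam (x m) n| ≤ M) →
      (∀ ε > (0 : ℝ), ∃ N, ∀ p ≥ N, ∀ q ≥ N, ∀ n,
        |Atr r s α lam (fun j => x p j - x q j) n| < ε) →
      ∃ y : ℕ → ℝ, (∃ M : ℝ, ∀ n, |Atr r s α lam y n| ≤ M) ∧
        ∀ ε > (0 : ℝ), ∃ N, ∀ m ≥ N, ∀ n,
          |Atr r s α lam (fun j => x m j - y j) n| < ε) ∧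
    -- `{x : (Ax)_n → 0}` is closed in `X∞`
    (∀ x : ℕ → (ℕ → ℝ), ∀ y : ℕ → ℝ,
      (∀ m, Tendsto (Atr r s α lam (x m)) atTop (nhds 0)) →
      (∀ ε > (0 : ℝ), ∃ N, ∀ m ≥ N, ∀ n,
        |Atr r s α lam (fun j => x m j - y j) n| < ε) →
      Tendsto (Atr r s α lam y) atTop (nhds 0)) ∧
    -- `{x : lim_n (Ax)_n exists}` is closed in `X∞`
    (∀ x : ℕ → (ℕ → ℝ), ∀ y : ℕ → ℝ,
      (∀ m, ∃ l : ℝ, Tendsto (Atr r s α lam (x m)) atTop (nhds l)) →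
      (∀ ε > (0 : ℝ), ∃ N, ∀ m ≥ N, ∀ n,
        |Atr r s α lam (fun j => x m j - y j) n| < ε) →
      ∃ l : ℝ, Tendsto (Atr r s α lam y) atTop (nhds l)) := by
  have hdiag : ∀ n, Amat r s α lam n n ≠ 0 := Amat_self_ne_zero hr hsr hα hlam0 hmono
  simp only [Atr_eq_triangularTransform, triangularTransform_sub, ← Real.norm_eq_abs,
    ← tendstoUniformly_atTop_iff_norm_sub_lt, ← uniformCauchySeqOn_univ_iff_norm_sub_lt]
  refine ⟨fun x hx => ?_, fun x hbdd hcauchy => ?_, fun x y hnull hunif => ?_,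
    fun x y hconv hunif => ?_⟩
  · have hx0 : x = 0 := triangularTransform_injective hdiag <| by
      funext n
      rw [hx n]
      simp [triangularTransform]
    exact fun n => congrFun hx0 n
  · obtain ⟨w, hw⟩ := hcauchy.exists_tendstoUniformly
    obtain ⟨y, rfl⟩ := triangularTransform_surjective hdiag w
    exact ⟨y, hw.exists_norm_le hbdd, hw⟩
  · exact hunif.tendsto_of_eventually_tendsto (Eventually.of_forall hnull) tendsto_const_nhds
  · exact cauchySeq_tendsto_of_complete
      (hunif.cauchySeq fun m => (hconv m).choose_spec.cauchySeq)

/-- `‖x‖ = sup_n |(Ax)_n|` is a norm on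
`X∞ = {x | sup_n |(Ax)_n| < ∞}` (in particular `Ax = 0` implies `x = 0`),
`X∞` is complete for the induced distance, and the subsets
`{x : (Ax)_n → 0}` and `{x : lim_n (Ax)_n exists}` are closed in `X∞`,
hence complete. -/
theorem binomial_space_BK (r s α : ℝ) (lam : ℕ → ℝ)
    (hr : r ≠ 0) (hsr : s + r ≠ 0) (hα : 0 < α) (hαint : ∀ m : ℤ, α ≠ (m : ℝ))
    (hlam0 : 0 < lam 0) (hmono : StrictMono lam) (hlam : Tendsto lam atTop atTop) :
    -- the norm separates points: `Ax = 0` implies `x = 0`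
    (∀ x : ℕ → ℝ, (∀ n, Atr r s α lam x n = 0) → ∀ n, x n = 0) ∧
    -- completeness of `X∞` for the distance `d(x,x') = sup_n |(A(x−x'))_n|`
    (∀ x : ℕ → (ℕ → ℝ),
      (∀ m, ∃ M : ℝ, ∀ n, |Atr r s α lam (x m) n| ≤ M) →
      (∀ ε > (0 : ℝ), ∃ N, ∀ p ≥ N, ∀ q ≥ N, ∀ n,
        |Atr r s α lam (fun j => x p j - x q j) n| < ε) →
      ∃ y : ℕ → ℝ, (∃ M : ℝ, ∀ n, |Atr r s α lam y n| ≤ M) ∧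
        ∀ ε > (0 : ℝ), ∃ N, ∀ m ≥ N, ∀ n,
          |Atr r s α lam (fun j => x m j - y j) n| < ε) ∧
    -- `{x : (Ax)_n → 0}` is closed in `X∞`
    (∀ x : ℕ → (ℕ → ℝ), ∀ y : ℕ → ℝ,
      (∀ m, Tendsto (Atr r s α lam (x m)) atTop (nhds 0)) →
      (∀ ε > (0 : ℝ), ∃ N, ∀ m ≥ N, ∀ n,
        |Atr r s α lam (fun j => x m j - y j) n| < ε) →
      Tendsto (Atr r s α lam y) atTop (nhds 0)) ∧
    -- `{x : lim_n (Ax)_n exists}` is closed in `X∞`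
    (∀ x : ℕ → (ℕ → ℝ), ∀ y : ℕ → ℝ,
      (∀ m, ∃ l : ℝ, Tendsto (Atr r s α lam (x m)) atTop (nhds l)) →
      (∀ ε > (0 : ℝ), ∃ N, ∀ m ≥ N, ∀ n,
        |Atr r s α lam (fun j => x m j - y j) n| < ε) →
      ∃ l : ℝ, Tendsto (Atr r s α lam y) atTop (nhds l)) :=
  binomial_space_BK_general r s α lam hr hsr hα hlam0 hmono
end

section
/- Let a : ℕ → ℕ → ℝ be an infinite matrix. The following are equivalent: (1) a ∈ (ℓ∞ : ℓ₁); (2) a ∈ (c : ℓ₁); (3) a ∈ (c₀ : ℓ₁); (4) there exists M ∈ ℝ such that for every finite set K ⊆ ℕ, the series Σ_n |Σ_{k∈K} a(n,k)| converges and its sum is at most M. -/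
/-!
Splitting a finite sum of reals by sign gives `∑_{n ∈ N} |b n| ≤ 2 sup_{P ⊆ N} |∑_{n ∈ P} b n|`.
Applied once in `n` and once in `k`, this turns condition (4) into
`∑_{n ∈ N} |∑_{k ∈ K} a n k x k| ≤ 4 M sup |x|`, whence `a ∈ (ℓ∞ : ℓ₁)`.
Conversely, if `a ∈ (c₀ : ℓ₁)`, the functionals `y ↦ ∑_{n ∈ P} ∑_k a n k y k` on the Banach space
`c₀ = C₀(ℕ, ℝ)` are pointwise bounded by `∑_n |∑_k a n k y k|`, hence uniformly bounded by
Banach–Steinhaus; evaluating them at the indicator of a finite set `K` gives (4).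
The remaining implications come from `c₀ ⊆ c ⊆ ℓ∞`.
-/

open Filter Topology

/-- The set of null real sequences. -/
def seqC0 : Set (ℕ → ℝ) := {y | Filter.Tendsto y Filter.atTop (nhds 0)}

/-- The set of convergent real sequences. -/
def seqC : Set (ℕ → ℝ) := {y | ∃ l : ℝ, Filter.Tendsto y Filter.atTop (nhds l)}

/-- The set of bounded real sequences. -/
def seqLinf : Set (ℕ → ℝ) := {y | ∃ M : ℝ, ∀ n, |y n| ≤ M}

/-- The set of absolutely summable real sequences. -/
def seqL1 : Set (ℕ → ℝ) := {y | Summable fun n => |y n|}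

/-- `a ∈ (X : Y)`: for every `x ∈ X` the series `Σ_k a(n,k)·x_k` converges
absolutely for each `n`, and the transformed sequence belongs to `Y`. -/
def MatClass (a : ℕ → ℕ → ℝ) (X Y : Set (ℕ → ℝ)) : Prop :=
  ∀ x ∈ X, (∀ n, Summable fun k => |a n k * x k|) ∧ (fun n => ∑' k, a n k * x k) ∈ Y

open scoped ZeroAtInfty

theorem seqC0_subset_seqC : seqC0 ⊆ seqC := fun _ hy => ⟨0, hy⟩

theorem seqC_subset_seqLinf : seqC ⊆ seqLinf := by
  rintro y ⟨l, hl⟩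
  obtain ⟨M, hM⟩ := hl.abs.bddAbove_range
  exact ⟨M, fun n => hM ⟨n, rfl⟩⟩

theorem MatClass.mono {a : ℕ → ℕ → ℝ} {X X' Y : Set (ℕ → ℝ)} (hX : X' ⊆ X)
    (h : MatClass a X Y) : MatClass a X' Y :=
  fun x hx => h x (hX hx)

theorem Finset.sum_abs_le_two_mul_of_abs_sum_le {ι : Type*} {g : ι → ℝ} {M : ℝ} (s : Finset ι)
    (h : ∀ t ⊆ s, |∑ i ∈ t, g i| ≤ M) : ∑ i ∈ s, |g i| ≤ 2 * M := by
  classical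
  have hpos : ∑ i ∈ s with 0 ≤ g i, |g i| ≤ M := by
    rw [Finset.sum_congr rfl fun i hi => abs_of_nonneg (Finset.mem_filter.mp hi).2]
    exact (le_abs_self _).trans (h _ (Finset.filter_subset _ _))
  have hneg : ∑ i ∈ s with ¬0 ≤ g i, |g i| ≤ M := by
    rw [Finset.sum_congr rfl fun i hi => abs_of_neg (not_le.mp (Finset.mem_filter.mp hi).2),
      Finset.sum_neg_distrib]
    exact (neg_le_abs _).trans (h _ (Finset.filter_subset _ _))
  rw [← Finset.sum_filter_add_sum_filter_not s (fun i => 0 ≤ g i)]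
  linarith

theorem summable_and_tsum_le_iff_forall_sum_le {ι : Type*} {g : ι → ℝ} (hg : 0 ≤ g) {M : ℝ} :
    (Summable g ∧ ∑' i, g i ≤ M) ↔ ∀ s : Finset ι, ∑ i ∈ s, g i ≤ M :=
  ⟨fun ⟨hs, hM⟩ s => (hs.sum_le_tsum s fun i _ => hg i).trans hM,
    fun h => have hs := summable_of_sum_le hg h; ⟨hs, hs.tsum_le_of_sum_le h⟩⟩

section FiniteBlocks

variable {ι κ : Type*} {a : ι → κ → ℝ} {M : ℝ}

theorem sum_abs_sum_mul_le (hM : ∀ (N : Finset ι) (K : Finset κ), ∑ n ∈ N, |∑ k ∈ K, a n k| ≤ M)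
    {x : κ → ℝ} {C : ℝ} (hC : 0 ≤ C) (hx : ∀ k, |x k| ≤ C) (N : Finset ι) (K : Finset κ) :
    ∑ n ∈ N, |∑ k ∈ K, a n k * x k| ≤ 4 * M * C := by
  have hcol : ∀ P : Finset ι, ∑ k ∈ K, |∑ n ∈ P, a n k| ≤ 2 * M := fun P =>
    K.sum_abs_le_two_mul_of_abs_sum_le fun L _ => by
      rw [Finset.sum_comm]
      exact (Finset.abs_sum_le_sum_abs _ _).trans (hM P L)
  calc ∑ n ∈ N, |∑ k ∈ K, a n k * x k| ≤ 2 * (2 * M * C) := by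
        refine N.sum_abs_le_two_mul_of_abs_sum_le fun P _ => ?_
        calc |∑ n ∈ P, ∑ k ∈ K, a n k * x k| = |∑ k ∈ K, (∑ n ∈ P, a n k) * x k| := by
              simp_rw [Finset.sum_comm (s := P), Finset.sum_mul]
          _ ≤ ∑ k ∈ K, |∑ n ∈ P, a n k| * C := by
              refine (Finset.abs_sum_le_sum_abs _ _).trans (Finset.sum_le_sum fun k _ => ?_)
              rw [abs_mul]
              exact mul_le_mul_of_nonneg_left (hx k) (abs_nonneg _)
          _ ≤ 2 * M * C := by
              rw [← Finset.sum_mul]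
              exact mul_le_mul_of_nonneg_right (hcol P) hC
    _ = 4 * M * C := by ring

theorem summable_abs_row_of_sum_abs_sum_le
    (hM : ∀ (N : Finset ι) (K : Finset κ), ∑ n ∈ N, |∑ k ∈ K, a n k| ≤ M) (n : ι) :
    Summable fun k => |a n k| :=
  summable_of_sum_le (fun _ => abs_nonneg _) fun K =>
    K.sum_abs_le_two_mul_of_abs_sum_le fun L _ => by simpa using hM {n} L

end FiniteBlocks

theorem matClass_seqLinf_seqL1_of_sum_abs_sum_le {a : ℕ → ℕ → ℝ} {M : ℝ}
    (hM : ∀ N K : Finset ℕ, ∑ n ∈ N, |∑ k ∈ K, a n k| ≤ M) : MatClass a seqLinf seqL1 := by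
  rintro x ⟨C, hx⟩
  have hC : 0 ≤ C := (abs_nonneg _).trans (hx 0)
  have hrow : ∀ n, Summable fun k => |a n k * x k| := fun n =>
    ((summable_abs_row_of_sum_abs_sum_le hM n).mul_right C).of_nonneg_of_le
      (fun _ => abs_nonneg _) fun k => by
        rw [abs_mul]; exact mul_le_mul_of_nonneg_left (hx k) (abs_nonneg _)
  refine ⟨hrow, summable_of_sum_le (c := 4 * M * C) (fun _ => abs_nonneg _) fun N => ?_⟩
  have hlim : Tendsto (fun K : Finset ℕ => ∑ n ∈ N, |∑ k ∈ K, a n k * x k|) atTop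
      (𝓝 (∑ n ∈ N, |∑' k, a n k * x k|)) :=
    tendsto_finsetSum N fun n _ => (continuous_abs.tendsto _).comp (hrow n).of_abs.hasSum
  exact le_of_tendsto' hlim (sum_abs_sum_mul_le hM hC hx N)

namespace ZeroAtInftyContinuousMap

variable {α : Type*} [TopologicalSpace α]

def evalCLM (𝕜 : Type*) {β : Type*} [NormedField 𝕜] [SeminormedAddCommGroup β]
    [NormedSpace 𝕜 β] (x : α) : C₀(α, β) →L[𝕜] β where
  toFun y := y x
  map_add' _ _ := rfl
  map_smul' _ _ := rfl
  cont :=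
    (continuous_eval_const (F := BoundedContinuousFunction α β) x).comp isometry_toBCF.continuous

theorem mem_seqC0 (y : C₀(ℕ, ℝ)) : ⇑y ∈ seqC0 := by
  simpa [seqC0, cocompact_eq_cofinite, Nat.cofinite_eq_atTop] using y.zero_at_infty'

noncomputable def indicatorOne [DiscreteTopology α] (K : Finset α) : C₀(α, ℝ) where
  toFun := Set.indicator K 1
  continuous_toFun := continuous_of_discreteTopology
  zero_at_infty' := by
    rw [cocompact_eq_cofinite]
    exact tendsto_nhds_of_eventually_eq <|
      eventually_of_mem K.finite_toSet.compl_mem_cofinite fun _ hk => Set.indicator_of_notMem hk _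

theorem indicatorOne_apply [DiscreteTopology α] (K : Finset α) (x : α) :
    indicatorOne K x = Set.indicator K 1 x := rfl

theorem norm_indicatorOne_le [DiscreteTopology α] (K : Finset α) : ‖indicatorOne K‖ ≤ 1 := by
  rw [← norm_toBCF_eq_norm, BoundedContinuousFunction.norm_le zero_le_one]
  intro x
  by_cases hx : x ∈ (K : Set α) <;> simp [indicatorOne_apply, hx]

variable [Countable α]

/-- Continuous by Banach–Steinhaus, as the pointwise limit of the partial sums over finite sets. -/
noncomputable def tsumMulCLM (f : α → ℝ) (hf : ∀ y : C₀(α, ℝ), Summable fun x => f x * y x) :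
    C₀(α, ℝ) →L[ℝ] ℝ :=
  continuousLinearMapOfTendsto (fun K : Finset α => ∑ x ∈ K, f x • evalCLM ℝ x)
    (tendsto_pi_nhds.2 fun y => by
      simp only [FunLike.coe_sum, Finset.sum_apply]
      exact (hf y).hasSum)

theorem tsumMulCLM_apply (f : α → ℝ) (hf : ∀ y : C₀(α, ℝ), Summable fun x => f x * y x)
    (y : C₀(α, ℝ)) : tsumMulCLM f hf y = ∑' x, f x * y x := rfl

end ZeroAtInftyContinuousMap

open ZeroAtInftyContinuousMap in
theorem exists_sum_abs_sum_le_of_matClass_seqC0_seqL1 {a : ℕ → ℕ → ℝ}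
    (h : MatClass a seqC0 seqL1) : ∃ M, ∀ N K : Finset ℕ, ∑ n ∈ N, |∑ k ∈ K, a n k| ≤ M := by
  let A (n : ℕ) : C₀(ℕ, ℝ) →L[ℝ] ℝ :=
    tsumMulCLM (a n) fun y => ((h y (mem_seqC0 y)).1 n).of_abs
  have hbdd (y : C₀(ℕ, ℝ)) : ∃ C, ∀ P : Finset ℕ, ‖∑ n ∈ P, A n y‖ ≤ C :=
    ⟨_, fun P => (Finset.abs_sum_le_sum_abs _ _).trans <|
      (h y (mem_seqC0 y)).2.sum_le_tsum P fun _ _ => abs_nonneg _⟩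
  obtain ⟨C, hC⟩ := banach_steinhaus (g := fun P : Finset ℕ => ∑ n ∈ P, A n) (by simpa using hbdd)
  refine ⟨2 * C, fun N K => N.sum_abs_le_two_mul_of_abs_sum_le fun P _ => ?_⟩
  have hA (n : ℕ) : A n (indicatorOne K) = ∑ k ∈ K, a n k := by
    rw [tsumMulCLM_apply, tsum_eq_sum (s := K) fun k hk => by simp [indicatorOne_apply, hk]]
    exact Finset.sum_congr rfl fun k hk => by simp [indicatorOne_apply, hk]
  calc |∑ n ∈ P, ∑ k ∈ K, a n k| = ‖(∑ n ∈ P, A n) (indicatorOne K)‖ := by simp [hA]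
    _ ≤ C * 1 := (ContinuousLinearMap.le_of_opNorm_le _ (hC P) _).trans <|
        mul_le_mul_of_nonneg_left (norm_indicatorOne_le K) ((norm_nonneg _).trans (hC P))
    _ = C := mul_one C

/-- `a ∈ (ℓ∞ : ℓ₁) ↔ a ∈ (c : ℓ₁) ↔ a ∈ (c₀ : ℓ₁)`, and these hold
iff there is `M` such that for every finite `K ⊆ ℕ` the series
`Σ_n |Σ_{k∈K} a(n,k)|` converges with sum at most `M`. -/
theorem matclass_into_l1 (a : ℕ → ℕ → ℝ) :
    (MatClass a seqLinf seqL1 ↔ MatClass a seqC seqL1) ∧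
    (MatClass a seqC seqL1 ↔ MatClass a seqC0 seqL1) ∧
    (MatClass a seqC0 seqL1 ↔
      ∃ M : ℝ, ∀ K : Finset ℕ,
        (Summable fun n => |∑ k ∈ K, a n k|) ∧ (∑' n, |∑ k ∈ K, a n k|) ≤ M) := by
  have h4_iff : (∃ M : ℝ, ∀ K : Finset ℕ,
        (Summable fun n => |∑ k ∈ K, a n k|) ∧ (∑' n, |∑ k ∈ K, a n k|) ≤ M) ↔
      ∃ M, ∀ N K : Finset ℕ, ∑ n ∈ N, |∑ k ∈ K, a n k| ≤ M :=
    exists_congr fun _ => (forall_congr' fun _ =>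
      summable_and_tsum_le_iff_forall_sum_le fun _ => abs_nonneg _).trans forall_comm
  have hLinf_C : MatClass a seqLinf seqL1 → MatClass a seqC seqL1 := .mono seqC_subset_seqLinf
  have hC_C0 : MatClass a seqC seqL1 → MatClass a seqC0 seqL1 := .mono seqC0_subset_seqC
  have hC0_4 := exists_sum_abs_sum_le_of_matClass_seqC0_seqL1 (a := a)
  have h4_Linf : (∃ M, ∀ N K : Finset ℕ, ∑ n ∈ N, |∑ k ∈ K, a n k| ≤ M) →
      MatClass a seqLinf seqL1 := fun ⟨_, hM⟩ => matClass_seqLinf_seqL1_of_sum_abs_sum_le hM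
  rw [h4_iff]
  exact ⟨⟨hLinf_C, fun h => h4_Linf (hC0_4 (hC_C0 h))⟩,
    ⟨hC_C0, fun h => hLinf_C (h4_Linf (hC0_4 h))⟩,
    ⟨hC0_4, fun h => hC_C0 (hLinf_C (h4_Linf h))⟩⟩
end

section
/- Let a : ℕ → ℕ → ℝ be an infinite matrix. Then a ∈ (c₀ : c) if and only if both of the following hold: (4.2) for each n the series Σ_k |a(n,k)| converges and sup_n Σ_k |a(n,k)| < ∞; (4.3) for each k the limit lim_{n→∞} a(n,k) exists. -/
/-!
Necessity rests on the uniform boundedness principle in the Banach space `C₀(ℕ, ℝ)`. A row `b`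
with `∑ |b k| < ∞` defines a continuous functional `f ↦ ∑ b k * f k` whose norm dominates every
finite sum `∑_{k ∈ s} |b k|`, as one sees by testing it against the sign vector of `b` on `s`.
Applied to the truncations of a single row this shows that the row is absolutely summable; applied
to the rows themselves it gives the uniform bound. Testing against unit vectors gives the column
limits.

For sufficiency, the column limits `l` satisfy `∑ |l k| ≤ M`, and `∑ (a n k - l k) * x k → 0`:
for a null sequence `x` the head of this series is a finite sum of null sequences, while its tail
is at most `2 M sup_{k ≥ K} |x k|`.
-/

open Filter Topology

open scoped ZeroAtInfty

section Series

variable {ι : Type*}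

theorem Filter.Tendsto.exists_forall_abs_le {u : ℕ → ℝ} {L : ℝ} (h : Tendsto u atTop (𝓝 L)) :
    ∃ C, ∀ n, |u n| ≤ C :=
  let ⟨C, hC⟩ := h.abs.bddAbove_range
  ⟨C, fun n => hC ⟨n, rfl⟩⟩

theorem summable_abs_mul_of_abs_le {b x : ι → ℝ} {C : ℝ} (hb : Summable fun k => |b k|)
    (hx : ∀ k, |x k| ≤ C) : Summable fun k => |b k * x k| :=
  (hb.mul_right C).of_nonneg_of_le (fun _ => abs_nonneg _) fun k => by
    rw [abs_mul]; exact mul_le_mul_of_nonneg_left (hx k) (abs_nonneg _)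

theorem abs_tsum_mul_le {b x : ι → ℝ} {C : ℝ} (hb : Summable fun k => |b k|)
    (hx : ∀ k, |x k| ≤ C) : |∑' k, b k * x k| ≤ (∑' k, |b k|) * C :=
  tsum_of_norm_bounded (hb.hasSum.mul_right C) fun k => by
    rw [Real.norm_eq_abs, abs_mul]; exact mul_le_mul_of_nonneg_left (hx k) (abs_nonneg _)

theorem abs_tsum_mul_le_sum_add {b x : ι → ℝ} {δ : ℝ} (hb : Summable fun k => |b k|)
    (hδ : 0 ≤ δ) (s : Finset ι) (hx : ∀ k ∉ s, |x k| ≤ δ) :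
    |∑' k, b k * x k| ≤ ∑ k ∈ s, |b k * x k| + δ * ∑' k, |b k| := by
  classical
  have hhead : HasSum (fun k => if k ∈ s then |b k * x k| else 0) (∑ k ∈ s, |b k * x k|) := by
    simpa using hasSum_sum_of_ne_finset_zero (f := fun k => if k ∈ s then |b k * x k| else 0)
      (s := s) fun k hk => if_neg hk
  rw [← Real.norm_eq_abs]
  refine tsum_of_norm_bounded (hhead.add (hb.hasSum.mul_left δ)) fun k => ?_
  rw [Real.norm_eq_abs]
  by_cases hk : k ∈ s
  · simp only [if_pos hk]; linarith [mul_nonneg hδ (abs_nonneg (b k))]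
  · simp only [if_neg hk, zero_add, abs_mul]; rw [mul_comm δ]
    exact mul_le_mul_of_nonneg_left (hx k hk) (abs_nonneg _)

theorem summable_abs_and_tsum_le_of_tendsto {a : ℕ → ι → ℝ} {l : ι → ℝ} {M : ℝ}
    (hrow : ∀ n, Summable fun k => |a n k|) (hM : ∀ n, ∑' k, |a n k| ≤ M)
    (hl : ∀ k, Tendsto (fun n => a n k) atTop (𝓝 (l k))) :
    Summable (fun k => |l k|) ∧ ∑' k, |l k| ≤ M := by
  have hfin : ∀ s : Finset ι, ∑ k ∈ s, |l k| ≤ M := fun s =>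
    le_of_tendsto (tendsto_finsetSum s fun k _ => (hl k).abs) <| Eventually.of_forall fun n =>
      ((hrow n).sum_le_tsum s fun k _ => abs_nonneg _).trans (hM n)
  have hsum := summable_of_sum_le (fun k => abs_nonneg (l k)) hfin
  exact ⟨hsum, hsum.tsum_le_of_sum_le hfin⟩

end Series

theorem tendsto_tsum_mul_of_tendsto_zero {d : ℕ → ℕ → ℝ} {B : ℝ}
    (hd : ∀ n, Summable fun k => |d n k|) (hB : ∀ n, ∑' k, |d n k| ≤ B)
    (hcol : ∀ k, Tendsto (fun n => d n k) atTop (𝓝 0)) {x : ℕ → ℝ}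
    (hx : Tendsto x atTop (𝓝 0)) : Tendsto (fun n => ∑' k, d n k * x k) atTop (𝓝 0) := by
  have hB0 : 0 ≤ B := (tsum_nonneg fun _ => abs_nonneg _).trans (hB 0)
  refine Metric.tendsto_nhds.2 fun ε hε => ?_
  set δ := ε / (2 * (B + 1))
  have hδ : 0 < δ := by positivity
  obtain ⟨K, hK⟩ := Metric.tendsto_atTop.1 hx δ hδ
  have hhead : Tendsto (fun n => ∑ k ∈ Finset.range K, |d n k * x k|) atTop (𝓝 0) := by
    simpa using tendsto_finsetSum (Finset.range K) fun k _ => ((hcol k).mul_const (x k)).abs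
  filter_upwards [hhead.eventually (gt_mem_nhds (half_pos hε))] with n hn
  have htail : ∀ k ∉ Finset.range K, |x k| ≤ δ := fun k hk => by
    simpa [Real.dist_0_eq_abs] using (hK k (by simpa using hk)).le
  have hδB : δ * B ≤ ε / 2 := by
    rw [div_mul_eq_mul_div, div_le_div_iff₀ (by positivity) two_pos]; nlinarith
  calc dist (∑' k, d n k * x k) 0
      ≤ ∑ k ∈ Finset.range K, |d n k * x k| + δ * ∑' k, |d n k| := by
        rw [Real.dist_0_eq_abs]; exact abs_tsum_mul_le_sum_add (hd n) hδ.le _ htail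
    _ ≤ ∑ k ∈ Finset.range K, |d n k * x k| + δ * B := by gcongr; exact hB n
    _ < ε := by linarith

theorem tendsto_tsum_mul_of_tendsto_columns {a : ℕ → ℕ → ℝ} {l : ℕ → ℝ} {M : ℝ}
    (hrow : ∀ n, Summable fun k => |a n k|) (hM : ∀ n, ∑' k, |a n k| ≤ M)
    (hl : ∀ k, Tendsto (fun n => a n k) atTop (𝓝 (l k))) {x : ℕ → ℝ}
    (hx : Tendsto x atTop (𝓝 0)) :
    Tendsto (fun n => ∑' k, a n k * x k) atTop (𝓝 (∑' k, l k * x k)) := by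
  obtain ⟨hls, hlM⟩ := summable_abs_and_tsum_le_of_tendsto hrow hM hl
  obtain ⟨C, hC⟩ := hx.exists_forall_abs_le
  have hd : ∀ n, Summable fun k => |a n k - l k| := fun n =>
    ((hrow n).add hls).of_nonneg_of_le (fun _ => abs_nonneg _) fun k => abs_sub _ _
  have hdM : ∀ n, ∑' k, |a n k - l k| ≤ M + M := fun n => by
    refine ((hd n).tsum_le_tsum (fun k => abs_sub _ _) ((hrow n).add hls)).trans ?_
    rw [(hrow n).tsum_add hls]; linarith [hM n]
  have hcol : ∀ k, Tendsto (fun n => a n k - l k) atTop (𝓝 0) := fun k => by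
    simpa using (hl k).sub_const (l k)
  rw [← tendsto_sub_nhds_zero_iff]
  refine (tendsto_tsum_mul_of_tendsto_zero hd hdM hcol hx).congr fun n => ?_
  simp_rw [sub_mul]
  exact (summable_abs_mul_of_abs_le (hrow n) hC).of_abs.tsum_sub
    (summable_abs_mul_of_abs_le hls hC).of_abs

theorem tendsto_atTop_zero_of_forall_notMem_eq_zero {β : Type*} [AddCommGroup β]
    [TopologicalSpace β] [IsTopologicalAddGroup β] {x : ℕ → β} (s : Finset ℕ)
    (hx : ∀ k ∉ s, x k = 0) :
    Tendsto x atTop (𝓝 0) :=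
  Nat.cofinite_eq_atTop ▸ (summable_of_ne_finset_zero hx).tendsto_cofinite_zero

namespace ZeroAtInftyContinuousMap

variable {β : Type*} [SeminormedAddCommGroup β]

theorem norm_apply_le_norm {α : Type*} [TopologicalSpace α] (f : C₀(α, β)) (x : α) :
    ‖f x‖ ≤ ‖f‖ :=
  norm_toBCF_eq_norm (f := f) ▸ f.toBCF.norm_coe_le_norm x

theorem tendsto_atTop_zero (f : C₀(ℕ, β)) : Tendsto f atTop (𝓝 0) :=
  cocompact_eq_atTop (α := ℕ) ▸ zero_at_infty f

def ofTendsto (x : ℕ → β) (hx : Tendsto x atTop (𝓝 0)) : C₀(ℕ, β) :=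
  ⟨⟨x, continuous_of_discreteTopology⟩, cocompact_eq_atTop (α := ℕ) ▸ hx⟩

@[simp]
theorem ofTendsto_apply (x : ℕ → β) (hx : Tendsto x atTop (𝓝 0)) (k : ℕ) :
    ofTendsto x hx k = x k :=
  rfl

theorem norm_ofTendsto_le {x : ℕ → β} (hx : Tendsto x atTop (𝓝 0)) {C : ℝ} (hC : 0 ≤ C)
    (hxC : ∀ k, ‖x k‖ ≤ C) : ‖ofTendsto x hx‖ ≤ C :=
  norm_toBCF_eq_norm (f := ofTendsto x hx) ▸ (BoundedContinuousFunction.norm_le hC).2 hxC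

end ZeroAtInftyContinuousMap

open ZeroAtInftyContinuousMap

noncomputable def weightedSumCLM (b : ℕ → ℝ) (hb : Summable fun k => |b k|) :
    C₀(ℕ, ℝ) →L[ℝ] ℝ :=
  LinearMap.mkContinuous
    { toFun := fun f => ∑' k, b k * f k
      map_add' := fun f g => by
        simp only [coe_add, Pi.add_apply, mul_add]
        exact (summable_abs_mul_of_abs_le hb fun k => norm_apply_le_norm f k).of_abs.tsum_add
          (summable_abs_mul_of_abs_le hb fun k => norm_apply_le_norm g k).of_abs
      map_smul' := fun c f => by
        simp only [coe_smul, Pi.smul_apply, smul_eq_mul, RingHom.id_apply, mul_left_comm _ c]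
        exact tsum_mul_left }
    (∑' k, |b k|) fun f => abs_tsum_mul_le hb fun k => norm_apply_le_norm f k

theorem weightedSumCLM_apply (b : ℕ → ℝ) (hb : Summable fun k => |b k|) (f : C₀(ℕ, ℝ)) :
    weightedSumCLM b hb f = ∑' k, b k * f k :=
  rfl

theorem sum_abs_le_norm_weightedSumCLM (b : ℕ → ℝ) (hb : Summable fun k => |b k|)
    (s : Finset ℕ) : ∑ k ∈ s, |b k| ≤ ‖weightedSumCLM b hb‖ := by
  classical
  set x : ℕ → ℝ := fun k => if k ∈ s then (SignType.sign (b k) : ℝ) else 0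
  have hx0 : ∀ k ∉ s, x k = 0 := fun k hk => if_neg hk
  set f := ofTendsto x (tendsto_atTop_zero_of_forall_notMem_eq_zero s hx0)
  have hf : ‖f‖ ≤ 1 := norm_ofTendsto_le _ zero_le_one fun k => by
    by_cases hk : k ∈ s
    · simp only [x, if_pos hk]; rcases SignType.sign (b k) with _ | _ | _ <;> simp
    · simp [hx0 k hk]
  have hfs : weightedSumCLM b hb f = ∑ k ∈ s, |b k| := by
    rw [weightedSumCLM_apply, tsum_eq_sum fun k hk => by simp [f, hx0 k hk]]
    exact Finset.sum_congr rfl fun k hk => by simp [f, x, hk]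
  calc ∑ k ∈ s, |b k| = ‖weightedSumCLM b hb f‖ := by
        rw [hfs, Real.norm_of_nonneg (Finset.sum_nonneg fun _ _ => abs_nonneg _)]
    _ ≤ ‖weightedSumCLM b hb‖ * ‖f‖ := (weightedSumCLM b hb).le_opNorm f
    _ ≤ ‖weightedSumCLM b hb‖ := mul_le_of_le_one_right (weightedSumCLM b hb).opNorm_nonneg hf

theorem exists_sum_abs_le_of_forall_bounded {ι : Type*} (b : ι → ℕ → ℝ)
    (hb : ∀ i, Summable fun k => |b i k|)
    (h : ∀ x : ℕ → ℝ, Tendsto x atTop (𝓝 0) → ∃ C, ∀ i, |∑' k, b i k * x k| ≤ C) :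
    ∃ C, ∀ i (s : Finset ℕ), ∑ k ∈ s, |b i k| ≤ C := by
  obtain ⟨C, hC⟩ := banach_steinhaus (g := fun i => weightedSumCLM (b i) (hb i))
    fun f => h f f.tendsto_atTop_zero
  exact ⟨C, fun i s => (sum_abs_le_norm_weightedSumCLM (b i) (hb i) s).trans (hC i)⟩

theorem summable_abs_of_forall_summable_abs_mul {b : ℕ → ℝ}
    (h : ∀ x : ℕ → ℝ, Tendsto x atTop (𝓝 0) → Summable fun k => |b k * x k|) :
    Summable fun k => |b k| := by
  set t : ℕ → ℕ → ℝ := fun N k => if k < N then b k else 0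
  have ht : ∀ N k, |t N k| ≤ |b k| := fun N k => by
    by_cases hk : k < N <;> simp [t, hk]
  have hts : ∀ N, Summable fun k => |t N k| := fun N =>
    summable_of_ne_finset_zero (s := Finset.range N) fun k hk => by simp_all [t]
  obtain ⟨C, hC⟩ := exists_sum_abs_le_of_forall_bounded t hts fun x hx =>
    ⟨∑' k, |b k * x k|, fun N => by
      rw [← Real.norm_eq_abs]
      refine tsum_of_norm_bounded (h x hx).hasSum fun k => ?_
      rw [Real.norm_eq_abs, abs_mul, abs_mul]
      exact mul_le_mul_of_nonneg_right (ht N k) (abs_nonneg _)⟩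
  refine summable_of_sum_range_le (fun _ => abs_nonneg _) fun N =>
    (hC N (Finset.range N)).trans' ?_
  exact (Finset.sum_congr rfl fun k hk => by simp [t, Finset.mem_range.1 hk]).le

/-- `a ∈ (c₀ : c)` iff (4.2) `Σ_k |a(n,k)|` converges for each `n`
with `sup_n Σ_k |a(n,k)| < ∞`, and (4.3) `lim_n a(n,k)` exists for each `k`. -/
theorem matclass_c0_c (a : ℕ → ℕ → ℝ) :
    MatClass a seqC0 seqC ↔
      ((∀ n, Summable fun k => |a n k|) ∧ ∃ M : ℝ, ∀ n, (∑' k, |a n k|) ≤ M) ∧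
      (∀ k, ∃ l : ℝ, Tendsto (fun n => a n k) atTop (nhds l)) := by
  constructor
  · intro h
    have hrow : ∀ n, Summable fun k => |a n k| := fun n =>
      summable_abs_of_forall_summable_abs_mul fun x hx => (h x hx).1 n
    obtain ⟨M, hM⟩ := exists_sum_abs_le_of_forall_bounded a hrow fun x hx =>
      (h x hx).2.choose_spec.exists_forall_abs_le
    refine ⟨⟨hrow, M, fun n => (hrow n).tsum_le_of_sum_le (hM n)⟩, fun k => ?_⟩
    have hk : Pi.single k (1 : ℝ) ∈ seqC0 :=
      tendsto_atTop_zero_of_forall_notMem_eq_zero {k} fun j hj => by simp_all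
    obtain ⟨L, hL⟩ := (h _ hk).2
    exact ⟨L, hL.congr fun n => by rw [tsum_eq_single k fun j hj => by simp [hj]]; simp⟩
  · rintro ⟨⟨hrow, M, hM⟩, hcol⟩ x hx
    choose l hl using hcol
    obtain ⟨C, hC⟩ := Filter.Tendsto.exists_forall_abs_le hx
    exact ⟨fun n => summable_abs_mul_of_abs_le (hrow n) hC, _,
      tendsto_tsum_mul_of_tendsto_columns hrow hM hl hx⟩
end

section
/- Let a : ℕ → ℕ → ℝ be an infinite matrix. Then a ∈ (ℓ∞ : c) if and only if all of the following hold: for each n the series Σ_k |a(n,k)| converges; (4.3) for each k the limit a_k := lim_{n→∞} a(n,k) exists; the series Σ_k |a_k| converges; and (4.5) lim_{n→∞} Σ_k |a(n,k)| = Σ_k |a_k|. -/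
open Filter Topology

set_option maxHeartbeats 1000000
set_option synthInstance.maxHeartbeats 400000

noncomputable def msgn (r : ℝ) : ℝ := if 0 ≤ r then 1 else -1

lemma abs_msgn (r : ℝ) : |msgn r| ≤ 1 := by
  unfold msgn; split <;> simp

lemma mul_msgn (r : ℝ) : r * msgn r = |r| := by
  unfold msgn; split
  · simp [abs_of_nonneg ‹_›]
  · rw [abs_of_neg (lt_of_not_ge ‹_›)]; ring

/-- Scheffé's lemma for series. -/
lemma scheffe {a : ℕ → ℕ → ℝ} {b : ℕ → ℝ} (ha : ∀ n, Summable fun k => |a n k|)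
    (hb : Summable fun k => |b k|)
    (hcol : ∀ k, Tendsto (fun n => a n k) atTop (𝓝 (b k)))
    (hnorm : Tendsto (fun n => ∑' k, |a n k|) atTop (𝓝 (∑' k, |b k|))) :
    Tendsto (fun n => ∑' k, |a n k - b k|) atTop (𝓝 0) := by
  have hsub : ∀ n, Summable fun k => |a n k - b k| := fun n =>
    Summable.of_nonneg_of_le (fun k => abs_nonneg _)
      (fun k => abs_sub _ _) ((ha n).add hb)
  rw [Metric.tendsto_atTop]
  intro ε hε
  have h4 : (0:ℝ) < ε/4 := by linarith
  -- choose m with tail of b small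
  obtain ⟨m, hm⟩ : ∃ m, (∑' k, |b (k + m)|) < ε/4 :=
    ((tendsto_sum_nat_add (fun k => |b k|)).eventually_lt_const h4).exists
  -- finite sums converge
  have hfin : Tendsto (fun n => ∑ k ∈ Finset.range m, |a n k|) atTop
      (𝓝 (∑ k ∈ Finset.range m, |b k|)) :=
    tendsto_finset_sum _ (fun k _ => (hcol k).abs)
  have htailA : Tendsto (fun n => ∑' k, |a n (k + m)|) atTop (𝓝 (∑' k, |b (k + m)|)) := by
    have h1 : ∀ n, (∑' k, |a n (k + m)|) =
        (∑' k, |a n k|) - ∑ k ∈ Finset.range m, |a n k| := by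
      intro n
      have := Summable.sum_add_tsum_nat_add (f := fun k => |a n k|) m (ha n)
      linarith
    have h2 : (∑' k, |b (k + m)|) = (∑' k, |b k|) - ∑ k ∈ Finset.range m, |b k| := by
      have := Summable.sum_add_tsum_nat_add (f := fun k => |b k|) m hb
      linarith
    simp only [h1]
    rw [h2]
    exact hnorm.sub hfin
  have hfin2 : Tendsto (fun n => ∑ k ∈ Finset.range m, |a n k - b k|) atTop (𝓝 0) := by
    have : Tendsto (fun n => ∑ k ∈ Finset.range m, |a n k - b k|) atTop
        (𝓝 (∑ k ∈ Finset.range m, |b k - b k|)) :=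
      tendsto_finset_sum _ (fun k _ => ((hcol k).sub_const (b k)).abs)
    simpa using this
  obtain ⟨N1, hN1⟩ := eventually_atTop.1
    (htailA.eventually_lt_const (show (∑' k, |b (k+m)|) < ε/4 + ε/4 by linarith))
  obtain ⟨N2, hN2⟩ := eventually_atTop.1 (hfin2.eventually_lt_const h4)
  refine ⟨max N1 N2, fun n hn => ?_⟩
  have hA := hN1 n (le_trans (le_max_left _ _) hn)
  have hF := hN2 n (le_trans (le_max_right _ _) hn)
  have hsplit := Summable.sum_add_tsum_nat_add (f := fun k => |a n k - b k|) m (hsub n)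
  have htail_le : (∑' k, |a n (k + m) - b (k + m)|) ≤
      (∑' k, |a n (k + m)|) + ∑' k, |b (k + m)| := by
    have s1 : Summable fun k => |a n (k + m)| := ((summable_nat_add_iff m).2 (ha n))
    have s2 : Summable fun k => |b (k + m)| := ((summable_nat_add_iff m).2 hb)
    calc (∑' k, |a n (k + m) - b (k + m)|)
        ≤ ∑' k, (|a n (k + m)| + |b (k + m)|) :=
          Summable.tsum_le_tsum (fun k => abs_sub _ _) ((summable_nat_add_iff m).2 (hsub n)) (s1.add s2)
      _ = _ := Summable.tsum_add s1 s2
  have hpos : (0:ℝ) ≤ ∑' k, |a n k - b k| := tsum_nonneg (fun k => abs_nonneg _)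
  rw [Real.dist_eq, sub_zero, abs_of_nonneg hpos]
  have heq : (∑' k, |a n k - b k|) =
      (∑ k ∈ Finset.range m, |a n k - b k|) + ∑' k, |a n (k + m) - b (k + m)| := hsplit.symm
  rw [heq]
  linarith

/-- Continuous linear functional on `ℓ∞` given by an absolutely summable row. -/
noncomputable def rowCLM (r : ℕ → ℝ) (hr : Summable fun k => |r k|) :
    lp (fun _ : ℕ => ℝ) ⊤ →L[ℝ] ℝ := by
  have habs : ∀ x : lp (fun _ : ℕ => ℝ) ⊤, Summable fun k => |r k * x k| := by
    intro x
    refine Summable.of_nonneg_of_le (fun k => abs_nonneg _) (fun k => ?_) (hr.mul_right ‖x‖)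
    rw [abs_mul]
    exact mul_le_mul_of_nonneg_left
      (by simpa using lp.norm_apply_le_norm (by norm_num) x k) (abs_nonneg _)
  refine LinearMap.mkContinuous
    { toFun := fun x => ∑' k, r k * x k
      map_add' := ?_
      map_smul' := ?_ } (∑' k, |r k|) ?_
  · intro x y
    have hx := (habs x).of_abs
    have hy := (habs y).of_abs
    simp only [lp.coeFn_add, Pi.add_apply]
    rw [← Summable.tsum_add hx hy]
    exact tsum_congr fun k => by ring
  · intro c x
    simp only [lp.coeFn_smul, Pi.smul_apply, RingHom.id_apply, smul_eq_mul]
    rw [← tsum_mul_left]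
    exact tsum_congr fun k => by ring
  · intro x
    simp only [LinearMap.coe_mk, AddHom.coe_mk]
    calc ‖∑' k, r k * x k‖ ≤ ∑' k, ‖r k * x k‖ :=
        norm_tsum_le_tsum_norm (by simpa only [Real.norm_eq_abs] using habs x)
      _ ≤ ∑' k, |r k| * ‖x‖ := Summable.tsum_le_tsum (fun k => by
            rw [Real.norm_eq_abs, abs_mul]
            exact mul_le_mul_of_nonneg_left
              (by simpa using lp.norm_apply_le_norm (by norm_num) x k) (abs_nonneg _))
            (by simpa only [Real.norm_eq_abs] using habs x) (hr.mul_right _)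
      _ = (∑' k, |r k|) * ‖x‖ := tsum_mul_right

/-- Uniform bound on row norms via Banach–Steinhaus. -/
lemma unif_bound {a : ℕ → ℕ → ℝ} (ha : ∀ n, Summable fun k => |a n k|)
    (hconv : ∀ x : ℕ → ℝ, (∃ M, ∀ k, |x k| ≤ M) →
      ∃ l, Tendsto (fun n => ∑' k, a n k * x k) atTop (𝓝 l)) :
    ∃ C, ∀ n, (∑' k, |a n k|) ≤ C := by
  set g : ℕ → lp (fun _ : ℕ => ℝ) ⊤ →L[ℝ] ℝ := fun n => rowCLM (a n) (ha n)
  have hg : ∀ n (x : lp (fun _ : ℕ => ℝ) ⊤), g n x = ∑' k, a n k * x k := fun n x => rfl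
  have hpt : ∀ x : lp (fun _ : ℕ => ℝ) ⊤, ∃ C, ∀ n, ‖g n x‖ ≤ C := by
    intro x
    obtain ⟨l, hl⟩ := hconv x ⟨‖x‖, fun k => by
      simpa using lp.norm_apply_le_norm (by norm_num) x k⟩
    obtain ⟨C, hC⟩ := hl.abs.bddAbove_range
    exact ⟨C, fun n => by
      rw [hg, Real.norm_eq_abs]; exact hC ⟨n, rfl⟩⟩
  obtain ⟨C, hC⟩ := banach_steinhaus hpt
  refine ⟨C, fun n => ?_⟩
  refine Summable.tsum_le_of_sum_range_le (ha n) (fun K => ?_)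
  -- test vector
  set y : ℕ → ℝ := fun k => if k < K then msgn (a n k) else 0 with hy
  have hybd : ∀ k, |y k| ≤ 1 := by
    intro k; rw [hy]; dsimp only; split
    · exact abs_msgn _
    · simp
  set Y : lp (fun _ : ℕ => ℝ) ⊤ :=
    ⟨y, memℓp_infty ⟨1, by rintro v ⟨k, rfl⟩; simpa using hybd k⟩⟩ with hY
  have hYnorm : ‖Y‖ ≤ 1 := lp.norm_le_of_forall_le zero_le_one (fun k => by
    show ‖y k‖ ≤ 1
    simpa using hybd k)
  have hval : g n Y = ∑ k ∈ Finset.range K, |a n k| := by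
    rw [hg]
    have hterm : ∀ k, a n k * (Y : ∀ _ : ℕ, ℝ) k = if k < K then |a n k| else 0 := by
      intro k
      show a n k * y k = _
      rw [hy]; dsimp only; split
      · exact mul_msgn _
      · simp
    rw [tsum_congr hterm, tsum_eq_sum (s := Finset.range K) (fun k hk => by
      rw [if_neg (by simpa using hk)])]
    exact Finset.sum_congr rfl fun k hk => if_pos (Finset.mem_range.1 hk)
  calc ∑ k ∈ Finset.range K, |a n k| = g n Y := hval.symm
    _ ≤ ‖g n Y‖ := le_abs_self _
    _ ≤ ‖g n‖ * ‖Y‖ := (g n).le_opNorm Y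
    _ ≤ C * 1 := mul_le_mul (hC n) hYnorm (norm_nonneg _) ((norm_nonneg _).trans (hC n))
    _ = C := mul_one C

/-- Gliding hump: Schur-type lemma. -/
lemma gliding_hump {c : ℕ → ℕ → ℝ} (hc : ∀ n, Summable fun k => |c n k|)
    (hcol : ∀ k, Tendsto (fun n => c n k) atTop (𝓝 0))
    (hconv : ∀ x : ℕ → ℝ, (∀ k, |x k| ≤ 1) →
      ∃ l, Tendsto (fun n => ∑' k, c n k * x k) atTop (𝓝 l)) :
    Tendsto (fun n => ∑' k, |c n k|) atTop (𝓝 0) := by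
  set t : ℕ → ℝ := fun n => ∑' k, |c n k| with ht
  by_contra hcon
  -- extract ε and frequent large norms
  obtain ⟨ε, hε, hfreq⟩ : ∃ ε > 0, ∀ N, ∃ n ≥ N, ε ≤ t n := by
    rw [Metric.tendsto_atTop] at hcon
    push_neg at hcon
    obtain ⟨ε, hε, hc2⟩ := hcon
    refine ⟨ε, hε, fun N => ?_⟩
    obtain ⟨n, hn1, hn2⟩ := hc2 N
    refine ⟨n, hn1, ?_⟩
    rw [Real.dist_eq, sub_zero, abs_of_nonneg (tsum_nonneg fun k => abs_nonneg _)] at hn2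
    exact hn2
  -- step existence
  have step : ∀ N K : ℕ, ∃ p : ℕ × ℕ, N ≤ p.1 ∧ K + 1 ≤ p.2 ∧ ε ≤ t p.1 ∧
      (∑ k ∈ Finset.range K, |c p.1 k|) < ε/5 ∧ (∑' k, |c p.1 (k + p.2)|) < ε/5 := by
    intro N K
    have hfs : Tendsto (fun n => ∑ k ∈ Finset.range K, |c n k|) atTop (𝓝 0) := by
      have : Tendsto (fun n => ∑ k ∈ Finset.range K, |c n k|) atTop
          (𝓝 (∑ k ∈ Finset.range K, |(0:ℝ)|)) :=
        tendsto_finset_sum _ (fun k _ => (hcol k).abs)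
      simpa using this
    have h5 : (0:ℝ) < ε/5 := by linarith
    obtain ⟨N₁, hN₁⟩ := eventually_atTop.1 (hfs.eventually_lt_const h5)
    obtain ⟨n, hn1, hn2⟩ := hfreq (max N N₁)
    have htail : Tendsto (fun i => ∑' k, |c n (k + i)|) atTop (𝓝 0) :=
      tendsto_sum_nat_add (fun k => |c n k|)
    obtain ⟨M, hM⟩ := eventually_atTop.1 (htail.eventually_lt_const h5)
    exact ⟨(n, max M (K+1)), le_trans (le_max_left _ _) hn1, le_max_right _ _, hn2,
      hN₁ n (le_trans (le_max_right _ _) hn1), hM _ (le_max_left _ _)⟩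
  choose f hf1 hf2 hf3 hf4 hf5 using step
  -- recursive construction
  let g : ℕ → ℕ × ℕ := fun j => Nat.rec (f 0 0) (fun _ p => f (p.1 + 1) p.2) j
  let nn : ℕ → ℕ := fun j => (g j).1
  let K : ℕ → ℕ := fun j => Nat.rec 0 (fun i _ => (g i).2) j
  have hnt : ∀ j, ε ≤ t (nn j) := by
    intro j; cases j with
    | zero => exact hf3 0 0
    | succ i => exact hf3 ((g i).1 + 1) ((g i).2)
  have hhead : ∀ j, (∑ k ∈ Finset.range (K j), |c (nn j) k|) < ε/5 := by
    intro j; cases j with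
    | zero => exact hf4 0 0
    | succ i => exact hf4 ((g i).1 + 1) ((g i).2)
  have htl : ∀ j, (∑' k, |c (nn j) (k + K (j+1))|) < ε/5 := by
    intro j; cases j with
    | zero => exact hf5 0 0
    | succ i => exact hf5 ((g i).1 + 1) ((g i).2)
  have hKmono : ∀ j, K j + 1 ≤ K (j + 1) := by
    intro j; cases j with
    | zero => exact hf2 0 0
    | succ i => exact hf2 ((g i).1 + 1) ((g i).2)
  have hKmono' : Monotone K := monotone_nat_of_le_succ (fun j => by
    have := hKmono j; omega)
  have hnmono : StrictMono nn := strictMono_nat_of_lt_succ (by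
    intro j
    have h1 : (g j).1 + 1 ≤ (f ((g j).1 + 1) (g j).2).1 := hf1 _ _
    show (g j).1 < (g (j+1)).1
    exact lt_of_lt_of_le (Nat.lt_succ_self _) h1)
  -- K tends to infinity: K j ≥ j
  have hKge : ∀ j, j ≤ K j := by
    intro j; induction j with
    | zero => exact Nat.zero_le _
    | succ i ih => have := hKmono i; omega
  have hcover : ∀ k, ∃ j, k < K (j + 1) :=
    fun k => ⟨k, lt_of_lt_of_le (Nat.lt_succ_self k) (hKge (k+1))⟩
  -- the test sequence
  let J : ℕ → ℕ := fun k => Nat.find (hcover k)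
  let x : ℕ → ℝ := fun k => (-1) ^ (J k) * msgn (c (nn (J k)) k)
  have hxbd : ∀ k, |x k| ≤ 1 := by
    intro k
    rw [show x k = (-1) ^ (J k) * msgn (c (nn (J k)) k) from rfl, abs_mul, abs_pow, abs_neg, abs_one, one_pow, one_mul]
    exact abs_msgn _
  have hJ : ∀ j k, K j ≤ k → k < K (j + 1) → J k = j := by
    intro j k h1 h2
    refine le_antisymm (Nat.find_le h2) ?_
    by_contra hlt
    push_neg at hlt
    have hspec : k < K (J k + 1) := Nat.find_spec (hcover k)
    have hle : J k + 1 ≤ j := hlt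
    have hmon : K (J k + 1) ≤ K j := hKmono' hle
    omega
  have hxval : ∀ k, x k = (-1) ^ (J k) * msgn (c (nn (J k)) k) := fun k => rfl
  clear_value x J K nn g
  obtain ⟨l, hl⟩ := hconv x hxbd
  have hlsub : Tendsto (fun j => ∑' k, c (nn j) k * x k) atTop (𝓝 l) :=
    hl.comp hnmono.tendsto_atTop
  -- estimate S j
  have hS : ∀ j, ((-1:ℝ)) ^ j * (∑' k, c (nn j) k * x k) ≥ ε/5 := by
    intro j
    set N := nn j with hN
    have hsx : Summable fun k => |c N k * x k| :=
      Summable.of_nonneg_of_le (fun k => abs_nonneg _)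
        (fun k => by
          rw [abs_mul]
          calc |c N k| * |x k| ≤ |c N k| * 1 :=
              mul_le_mul_of_nonneg_left (hxbd k) (abs_nonneg _)
            _ = |c N k| := mul_one _) (hc N)
    have hsx' : Summable fun k => c N k * x k := hsx.of_abs
    have hsplit := Summable.sum_add_tsum_nat_add (f := fun k => c N k * x k) (K (j+1)) hsx'
    have hKj : K j ≤ K (j + 1) := hKmono' (Nat.le_succ j)
    have hsplit2 : (∑ k ∈ Finset.range (K (j+1)), c N k * x k) =
        (∑ k ∈ Finset.Ico 0 (K j), c N k * x k) +
        ∑ k ∈ Finset.Ico (K j) (K (j+1)), c N k * x k := by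
      rw [Finset.sum_Ico_consecutive _ (Nat.zero_le _) hKj, Finset.range_eq_Ico]
    -- middle block value
    have hmid : (∑ k ∈ Finset.Ico (K j) (K (j+1)), c N k * x k) =
        (-1:ℝ)^j * ∑ k ∈ Finset.Ico (K j) (K (j+1)), |c N k| := by
      rw [Finset.mul_sum]
      refine Finset.sum_congr rfl fun k hk => ?_
      obtain ⟨h1, h2⟩ := Finset.mem_Ico.1 hk
      have hJk : J k = j := hJ j k h1 h2
      rw [hxval k, hJk, ← hN, ← mul_msgn (c N k)]
      ring
    -- bounds
    have hmid_ge : (∑ k ∈ Finset.Ico (K j) (K (j+1)), |c N k|) ≥ 3*ε/5 := by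
      have h1 := Summable.sum_add_tsum_nat_add (f := fun k => |c N k|) (K (j+1)) (hc N)
      have h2 : (∑ k ∈ Finset.range (K (j+1)), |c N k|) =
          (∑ k ∈ Finset.range (K j), |c N k|) +
          ∑ k ∈ Finset.Ico (K j) (K (j+1)), |c N k| := by
        rw [Finset.range_eq_Ico, ← Finset.sum_Ico_consecutive _ (Nat.zero_le (K j)) hKj,
          ← Finset.range_eq_Ico]
      have h3 := htl j
      have h4 := hhead j
      have h5 := hnt j
      have ht' : t N = ∑' k, |c N k| := rfl
      rw [← ht'] at h1
      linarith
    have hheadbd : |∑ k ∈ Finset.Ico 0 (K j), c N k * x k| < ε/5 := by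
      rw [← Finset.range_eq_Ico]
      calc |∑ k ∈ Finset.range (K j), c N k * x k|
          ≤ ∑ k ∈ Finset.range (K j), |c N k * x k| := Finset.abs_sum_le_sum_abs _ _
        _ ≤ ∑ k ∈ Finset.range (K j), |c N k| := Finset.sum_le_sum fun k _ => by
            rw [abs_mul]
            calc |c N k| * |x k| ≤ |c N k| * 1 :=
                mul_le_mul_of_nonneg_left (hxbd k) (abs_nonneg _)
              _ = _ := mul_one _
        _ < ε/5 := hhead j
    have htailbd : |∑' k, c N (k + K (j+1)) * x (k + K (j+1))| < ε/5 := by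
      calc |∑' k, c N (k + K (j+1)) * x (k + K (j+1))|
          ≤ ∑' k, |c N (k + K (j+1)) * x (k + K (j+1))| := by
            simpa only [Real.norm_eq_abs] using
              norm_tsum_le_tsum_norm (f := fun k => c N (k + K (j+1)) * x (k + K (j+1)))
              (by simpa only [Real.norm_eq_abs] using (summable_nat_add_iff (K (j+1))).2 hsx)
        _ ≤ ∑' k, |c N (k + K (j+1))| := Summable.tsum_le_tsum (fun k => by
              rw [abs_mul]
              calc |c N (k + K (j+1))| * |x (k + K (j+1))| ≤ |c N (k + K (j+1))| * 1 :=
                  mul_le_mul_of_nonneg_left (hxbd _) (abs_nonneg _)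
                _ = _ := mul_one _)
            ((summable_nat_add_iff (K (j+1))).2 hsx) ((summable_nat_add_iff (K (j+1))).2 (hc N))
        _ < ε/5 := htl j
    have heq : (∑' k, c N k * x k) =
        (∑ k ∈ Finset.Ico 0 (K j), c N k * x k) +
        (-1:ℝ)^j * (∑ k ∈ Finset.Ico (K j) (K (j+1)), |c N k|) +
        ∑' k, c N (k + K (j+1)) * x (k + K (j+1)) := by
      rw [← hsplit, hsplit2, hmid]
    rw [heq]
    have hpm : ((-1:ℝ))^j * ((-1:ℝ))^j = 1 := by
      rw [← pow_add, ← two_mul, pow_mul]; norm_num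
    have habs1 : ∀ y : ℝ, |y| < ε/5 → ((-1:ℝ))^j * y ≥ -(ε/5) := by
      intro y hy
      have h1 : |(-1:ℝ)^j * y| = |y| := by
        rw [abs_mul, abs_pow, abs_neg, abs_one, one_pow, one_mul]
      have h2 := neg_abs_le ((-1:ℝ)^j * y)
      rw [h1] at h2
      linarith
    have h1 := habs1 _ hheadbd
    have h2 := habs1 _ htailbd
    have h3 : ((-1:ℝ))^j * ((-1:ℝ)^j * (∑ k ∈ Finset.Ico (K j) (K (j+1)), |c N k|)) =
        (∑ k ∈ Finset.Ico (K j) (K (j+1)), |c N k|) := by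
      rw [← mul_assoc, hpm, one_mul]
    rw [mul_add, mul_add, h3]
    linarith
  -- derive contradiction
  have h2j : Tendsto (fun j : ℕ => 2*j) atTop atTop :=
    (strictMono_nat_of_lt_succ (fun n => by omega)).tendsto_atTop
  have h2j1 : Tendsto (fun j : ℕ => 2*j+1) atTop atTop :=
    (strictMono_nat_of_lt_succ (fun n => by omega)).tendsto_atTop
  have heven : Tendsto (fun j => ∑' k, c (nn (2*j)) k * x k) atTop (𝓝 l) :=
    hlsub.comp h2j
  have hodd : Tendsto (fun j => ∑' k, c (nn (2*j+1)) k * x k) atTop (𝓝 l) :=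
    hlsub.comp h2j1
  have hl1 : ε/5 ≤ l := by
    refine ge_of_tendsto' heven (fun j => ?_)
    have h := hS (2*j)
    have hpow : ((-1:ℝ))^(2*j) = 1 := by rw [pow_mul]; norm_num
    rw [hpow, one_mul] at h
    exact h
  have hl2 : l ≤ -(ε/5) := by
    refine le_of_tendsto' hodd (fun j => ?_)
    have h := hS (2*j+1)
    have hpow : ((-1:ℝ))^(2*j+1) = -1 := by rw [pow_succ, pow_mul]; norm_num
    rw [hpow] at h
    linarith
  linarith

/-- `a ∈ (ℓ∞ : c)` iff `Σ_k |a(n,k)|` converges for each `n`,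
(4.3) `a_k := lim_n a(n,k)` exists for each `k`, `Σ_k |a_k|` converges, and
(4.5) `lim_n Σ_k |a(n,k)| = Σ_k |a_k|`. -/
theorem matclass_linf_c (a : ℕ → ℕ → ℝ) :
    MatClass a seqLinf seqC ↔
      (∀ n, Summable fun k => |a n k|) ∧
      ∃ b : ℕ → ℝ,
        (∀ k, Tendsto (fun n => a n k) atTop (nhds (b k))) ∧
        (Summable fun k => |b k|) ∧
        Tendsto (fun n => ∑' k, |a n k|) atTop (nhds (∑' k, |b k|)) := by
  constructor
  · intro h
    have hone : (fun _ : ℕ => (1:ℝ)) ∈ seqLinf := ⟨1, fun n => by norm_num⟩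
    have hrow : ∀ n, Summable fun k => |a n k| := by
      intro n
      have := (h _ hone).1 n
      simpa using this
    have hcolex : ∀ k, ∃ l, Tendsto (fun n => a n k) atTop (𝓝 l) := by
      intro k0
      have he : (fun k => if k = k0 then (1:ℝ) else 0) ∈ seqLinf :=
        ⟨1, fun k => by dsimp only; split <;> norm_num⟩
      obtain ⟨l, hl⟩ := (h _ he).2
      refine ⟨l, ?_⟩
      have hval : ∀ n, (∑' k, a n k * (if k = k0 then (1:ℝ) else 0)) = a n k0 := by
        intro n
        rw [tsum_eq_single k0 (fun k hk => by rw [if_neg hk, mul_zero])]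
        simp
      have : (fun n => ∑' k, a n k * (if k = k0 then (1:ℝ) else 0)) =
          (fun n => a n k0) := funext hval
      rwa [this] at hl
    choose b hb using hcolex
    have hconv : ∀ x : ℕ → ℝ, (∃ M, ∀ k, |x k| ≤ M) →
        ∃ l, Tendsto (fun n => ∑' k, a n k * x k) atTop (𝓝 l) := fun x hx => (h x hx).2
    obtain ⟨C, hC⟩ := unif_bound hrow hconv
    have hbsum : Summable fun k => |b k| := by
      refine summable_of_sum_range_le (c := C) (fun k => abs_nonneg _) (fun K => ?_)
      have hlim : Tendsto (fun n => ∑ k ∈ Finset.range K, |a n k|) atTop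
          (𝓝 (∑ k ∈ Finset.range K, |b k|)) :=
        tendsto_finset_sum _ (fun k _ => (hb k).abs)
      refine le_of_tendsto' hlim (fun n => ?_)
      exact le_trans (Summable.sum_le_tsum _ (fun k _ => abs_nonneg _) (hrow n)) (hC n)
    refine ⟨hrow, b, hb, hbsum, ?_⟩
    have hcsub : ∀ n, Summable fun k => |a n k - b k| := fun n =>
      Summable.of_nonneg_of_le (fun k => abs_nonneg _)
        (fun k => abs_sub _ _) ((hrow n).add hbsum)
    have ht0 : Tendsto (fun n => ∑' k, |a n k - b k|) atTop (𝓝 0) := by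
      refine gliding_hump (c := fun n k => a n k - b k) hcsub ?_ ?_
      · intro k; simpa using (hb k).sub_const (b k)
      · intro x hx
        obtain ⟨l, hl⟩ := hconv x ⟨1, hx⟩
        have hax : ∀ n, Summable fun k => a n k * x k := fun n =>
          (Summable.of_nonneg_of_le (fun k => abs_nonneg _)
            (fun k => by rw [abs_mul]
                         exact le_trans (mul_le_mul_of_nonneg_left (hx k) (abs_nonneg _))
                           (le_of_eq (mul_one _))) (hrow n)).of_abs
        have hbx : Summable fun k => b k * x k :=
          (Summable.of_nonneg_of_le (fun k => abs_nonneg _)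
            (fun k => by rw [abs_mul]
                         exact le_trans (mul_le_mul_of_nonneg_left (hx k) (abs_nonneg _))
                           (le_of_eq (mul_one _))) hbsum).of_abs
        refine ⟨l - ∑' k, b k * x k, ?_⟩
        have heq : ∀ n, (∑' k, (a n k - b k) * x k) =
            (∑' k, a n k * x k) - ∑' k, b k * x k := by
          intro n
          rw [← Summable.tsum_sub (hax n) hbx]
          exact tsum_congr fun k => by ring
        simp only [heq]
        exact hl.sub_const _
    have hbound : ∀ n, ‖(∑' k, |a n k|) - ∑' k, |b k|‖ ≤ ∑' k, |a n k - b k| := by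
      intro n
      have hs : Summable fun k => ‖|a n k| - |b k|‖ :=
        Summable.of_nonneg_of_le (fun k => norm_nonneg _)
          (fun k => by
            simpa [Real.norm_eq_abs] using abs_abs_sub_abs_le_abs_sub (a n k) (b k))
          (hcsub n)
      rw [← Summable.tsum_sub (hrow n) hbsum]
      calc ‖∑' k, (|a n k| - |b k|)‖ ≤ ∑' k, ‖|a n k| - |b k|‖ := norm_tsum_le_tsum_norm hs
        _ ≤ ∑' k, |a n k - b k| := Summable.tsum_le_tsum (fun k => by
              simpa [Real.norm_eq_abs] using abs_abs_sub_abs_le_abs_sub (a n k) (b k))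
            hs (hcsub n)
    have hfin := squeeze_zero_norm hbound ht0
    have := hfin.add_const (∑' k, |b k|)
    simpa using this
  · rintro ⟨hrow, b, hcol, hbsum, hnorm⟩
    intro x hx
    obtain ⟨M, hM⟩ := hx
    have hM0 : (0:ℝ) ≤ M := le_trans (abs_nonneg _) (hM 0)
    have hsum : ∀ n, Summable fun k => |a n k * x k| := fun n =>
      Summable.of_nonneg_of_le (fun k => abs_nonneg _)
        (fun k => by rw [abs_mul]; exact mul_le_mul_of_nonneg_left (hM k) (abs_nonneg _))
        ((hrow n).mul_right M)
    have hbx : Summable fun k => |b k * x k| :=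
      Summable.of_nonneg_of_le (fun k => abs_nonneg _)
        (fun k => by rw [abs_mul]; exact mul_le_mul_of_nonneg_left (hM k) (abs_nonneg _))
        (hbsum.mul_right M)
    refine ⟨hsum, ∑' k, b k * x k, ?_⟩
    have ht0 := scheffe hrow hbsum hcol hnorm
    have hcsub : ∀ n, Summable fun k => |a n k - b k| := fun n =>
      Summable.of_nonneg_of_le (fun k => abs_nonneg _)
        (fun k => abs_sub _ _) ((hrow n).add hbsum)
    have hbound : ∀ n, ‖(∑' k, a n k * x k) - ∑' k, b k * x k‖ ≤
        (∑' k, |a n k - b k|) * M := by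
      intro n
      rw [← Summable.tsum_sub (hsum n).of_abs hbx.of_abs]
      have h1 : (∑' k, (a n k * x k - b k * x k)) = ∑' k, (a n k - b k) * x k :=
        tsum_congr fun k => by ring
      rw [h1]
      have hs : Summable fun k => ‖(a n k - b k) * x k‖ :=
        Summable.of_nonneg_of_le (fun k => norm_nonneg _)
          (fun k => by
            rw [Real.norm_eq_abs, abs_mul]
            exact mul_le_mul_of_nonneg_left (hM k) (abs_nonneg _))
          ((hcsub n).mul_right M)
      calc ‖∑' k, (a n k - b k) * x k‖ ≤ ∑' k, ‖(a n k - b k) * x k‖ :=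
          norm_tsum_le_tsum_norm hs
        _ ≤ ∑' k, |a n k - b k| * M := Summable.tsum_le_tsum (fun k => by
              rw [Real.norm_eq_abs, abs_mul]
              exact mul_le_mul_of_nonneg_left (hM k) (abs_nonneg _))
            hs ((hcsub n).mul_right M)
        _ = (∑' k, |a n k - b k|) * M := tsum_mul_right
    have htM : Tendsto (fun n => (∑' k, |a n k - b k|) * M) atTop (𝓝 0) := by
      simpa using ht0.mul_const M
    have hfin := squeeze_zero_norm hbound htM
    have := hfin.add_const (∑' k, b k * x k)
    simpa using this
end

section
/- Let d : ℕ → ℝ be a real sequence and define t(n,k) = Σ_{i=k}^{n} d_i·C(i,k) for 0 ≤ k ≤ n and t(n,k) = 0 for k > n. Then the following are equivalent: (a) for every real sequence x with (Ax)_n → 0, the partial sums Σ_{k=0}^{n} d_k·x_k converge as n → ∞; (b) sup_n Σ_{k=0}^{n} |t(n,k)| < ∞ and for each k the limit lim_{n→∞} t(n,k) exists. In other words, d belongs to the β-dual of the space {x : Ax ∈ c₀} exactly under condition (b). -/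
open Filter Topology

/-- `t(n,k) = Σ_{i=k}^{n} d_i·C(i,k)` for `k ≤ n` and `0` for `k > n`
(the `Finset.Icc k n` sum is empty when `k > n`). -/
noncomputable def tmat (d : ℕ → ℝ) (C : ℕ → ℕ → ℝ) (n k : ℕ) : ℝ :=
  ∑ i ∈ Finset.Icc k n, d i * C i k

/-!
Since `A` is lower triangular with two-sided inverse `C`, the map `y ↦ C y` is a bijection from
the null sequences onto `{x : Ax ∈ c₀}`, and `Σ_{k ≤ n} d_k (C y)_k = Σ_{k ≤ n} t(n,k) y_k`. So `d`
lies in the β-dual exactly when the matrix `t` maps `c₀` into `c`, and (b) is the classical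
characterisation of such matrices: the row bound comes from Banach–Steinhaus on `c₀`, the
column limits from the unit vectors, and conversely, under (b), `t y` converges because it is
the uniform limit of the transforms of the truncations of `y`.
-/

open Finset ZeroAtInfty

noncomputable def matTransform (T : ℕ → ℕ → ℝ) (y : ℕ → ℝ) (n : ℕ) : ℝ :=
  ∑ k ∈ range (n + 1), T n k * y k

lemma abs_matTransform_le (T : ℕ → ℕ → ℝ) {y : ℕ → ℝ} {B : ℝ} (hy : ∀ k, |y k| ≤ B) (n : ℕ) :
    |matTransform T y n| ≤ (∑ k ∈ range (n + 1), |T n k|) * B :=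
  calc |matTransform T y n| ≤ ∑ k ∈ range (n + 1), |T n k| * |y k| := by
        simpa only [matTransform, abs_mul] using
          abs_sum_le_sum_abs (fun k => T n k * y k) (range (n + 1))
    _ ≤ ∑ k ∈ range (n + 1), |T n k| * B := by gcongr with k; exact hy k
    _ = (∑ k ∈ range (n + 1), |T n k|) * B := (sum_mul ..).symm

lemma matTransform_sub (T : ℕ → ℕ → ℝ) (y z : ℕ → ℝ) (n : ℕ) :
    matTransform T y n - matTransform T z n = matTransform T (y - z) n := by
  simp only [matTransform, ← sum_sub_distrib, Pi.sub_apply, mul_sub]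

lemma matTransform_single (T : ℕ → ℕ → ℝ) {k n : ℕ} (hkn : k ≤ n) :
    matTransform T (Pi.single k 1) n = T n k := by
  simp [matTransform, Pi.single_apply, Nat.lt_succ_iff.mpr hkn]

lemma matTransform_sign (T : ℕ → ℕ → ℝ) (n : ℕ) :
    matTransform T (fun k => if k ≤ n then (SignType.sign (T n k) : ℝ) else 0) n =
      ∑ k ∈ range (n + 1), |T n k| :=
  sum_congr rfl fun k hk => by
    dsimp only
    rw [if_pos (Nat.lt_succ_iff.mp (mem_range.mp hk)), self_mul_sign]

lemma matTransform_matTransform {A B : ℕ → ℕ → ℝ} (hB : ∀ i k, i < k → B i k = 0)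
    (y : ℕ → ℝ) (n : ℕ) :
    matTransform A (matTransform B y) n =
      matTransform (fun n k => ∑ i ∈ range (n + 1), A n i * B i k) y n := by
  have hextend : ∀ i ∈ range (n + 1), A n i * matTransform B y i =
      ∑ k ∈ range (n + 1), A n i * (B i k * y k) := fun i hi => by
    rw [matTransform, mul_sum]
    refine sum_subset (range_subset_range.mpr (by simpa using hi)) fun k _ hk => ?_
    rw [hB i k (by simpa using hk), zero_mul, mul_zero]
  rw [matTransform, sum_congr rfl hextend, sum_comm, matTransform]
  simp only [sum_mul, mul_assoc]

lemma matTransform_matTransform_of_mul_eq_one {A B : ℕ → ℕ → ℝ}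
    (hB : ∀ i k, i < k → B i k = 0)
    (hAB : ∀ n k, k ≤ n → ∑ i ∈ range (n + 1), A n i * B i k = if n = k then 1 else 0)
    (y : ℕ → ℝ) : matTransform A (matTransform B y) = y := funext fun n => by
  rw [matTransform_matTransform hB, matTransform,
    sum_congr rfl fun k hk => by rw [hAB n k (Nat.lt_succ_iff.mp (mem_range.mp hk))]]
  simp

lemma sum_range_mul_matTransform (d : ℕ → ℝ) {C : ℕ → ℕ → ℝ}
    (hC : ∀ i k, i < k → C i k = 0) (y : ℕ → ℝ) (n : ℕ) :
    ∑ k ∈ range (n + 1), d k * matTransform C y k = matTransform (tmat d C) y n := by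
  refine (matTransform_matTransform (A := fun _ k => d k) hC y n).trans
    (sum_congr rfl fun j hj => congrArg (· * y j) ?_)
  refine (sum_subset (fun i hi => ?_) fun i hi hi' => ?_).symm
  · simp only [mem_Icc, mem_range] at hi ⊢; omega
  · rw [hC i j (by simp only [mem_Icc, mem_range, not_and, not_le] at hi hi' hj; omega), mul_zero]

lemma Amat_eq_zero_of_lt (r s α : ℝ) (lam : ℕ → ℝ) {n k : ℕ} (h : n < k) :
    Amat r s α lam n k = 0 := by
  rw [Amat, Icc_eq_empty_of_lt h, sum_empty]

/-- `c₀` as the Banach space `C₀(ℕ, β)`: on discrete `ℕ` the cocompact filter is `atTop`. -/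
def ofTendstoZero {β : Type*} [TopologicalSpace β] [Zero β] {y : ℕ → β}
    (hy : Tendsto y atTop (𝓝 0)) : C₀(ℕ, β) where
  toFun := y
  continuous_toFun := continuous_of_discreteTopology
  zero_at_infty' := by rwa [cocompact_eq_cofinite, Nat.cofinite_eq_atTop]

lemma ZeroAtInftyContinuousMap.tendsto_atTop {β : Type*} [TopologicalSpace β] [Zero β]
    (f : C₀(ℕ, β)) : Tendsto f atTop (𝓝 0) := by
  simpa only [cocompact_eq_cofinite, Nat.cofinite_eq_atTop] using zero_at_infty f

lemma ZeroAtInftyContinuousMap.norm_apply_le_norm_s17 {β : Type*} [NormedAddCommGroup β]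
    (f : C₀(ℕ, β)) (k : ℕ) : ‖f k‖ ≤ ‖f‖ :=
  (f.toBCF.norm_coe_le_norm k).trans_eq ZeroAtInftyContinuousMap.norm_toBCF_eq_norm

lemma norm_ofTendstoZero_le {β : Type*} [NormedAddCommGroup β] {y : ℕ → β}
    (hy : Tendsto y atTop (𝓝 0)) {B : ℝ} (hB : 0 ≤ B) (hyB : ∀ k, ‖y k‖ ≤ B) :
    ‖ofTendstoZero hy‖ ≤ B := by
  rw [← ZeroAtInftyContinuousMap.norm_toBCF_eq_norm]
  exact (BoundedContinuousFunction.norm_le hB).mpr hyB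

noncomputable def rowFunctional (T : ℕ → ℕ → ℝ) (n : ℕ) : C₀(ℕ, ℝ) →L[ℝ] ℝ :=
  LinearMap.mkContinuous
    { toFun := fun f => matTransform T f n
      map_add' := fun f g => by simp only [matTransform, ZeroAtInftyContinuousMap.coe_add,
        Pi.add_apply, mul_add, sum_add_distrib]
      map_smul' := fun c f => by simp only [matTransform, ZeroAtInftyContinuousMap.coe_smul,
        Pi.smul_apply, smul_eq_mul, RingHom.id_apply, mul_sum, mul_left_comm] }
    (∑ k ∈ range (n + 1), |T n k|)
    fun f => abs_matTransform_le T f.norm_apply_le_norm_s17 n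

lemma exists_sum_abs_le_of_forall_tendsto (T : ℕ → ℕ → ℝ)
    (h : ∀ y : ℕ → ℝ, Tendsto y atTop (𝓝 0) → ∃ l, Tendsto (matTransform T y) atTop (𝓝 l)) :
    ∃ M, ∀ n, ∑ k ∈ range (n + 1), |T n k| ≤ M := by
  have hpt : ∀ f : C₀(ℕ, ℝ), ∃ B, ∀ n, ‖rowFunctional T n f‖ ≤ B := fun f => by
    obtain ⟨l, hl⟩ := h f f.tendsto_atTop
    obtain ⟨B, hB⟩ := hl.norm.bddAbove_range
    exact ⟨B, fun n => hB ⟨n, rfl⟩⟩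
  obtain ⟨M, hM⟩ := banach_steinhaus hpt
  refine ⟨M, fun n => ?_⟩
  set y : ℕ → ℝ := fun k => if k ≤ n then (SignType.sign (T n k) : ℝ) else 0
  have hy : Tendsto y atTop (𝓝 0) :=
    tendsto_const_nhds.congr' <| (eventually_gt_atTop n).mono fun k hk => by
      simp [y, hk.not_ge]
  have hy1 : ∀ k, |y k| ≤ 1 := fun k => by
    unfold y
    split_ifs
    · rcases SignType.sign (T n k) with _ | _ | _ <;> norm_num
    · norm_num
  calc ∑ k ∈ range (n + 1), |T n k| = rowFunctional T n (ofTendstoZero hy) :=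
        (matTransform_sign T n).symm
    _ ≤ ‖rowFunctional T n‖ * ‖ofTendstoZero hy‖ := le_of_abs_le ((rowFunctional T n).le_opNorm _)
    _ ≤ M * 1 := mul_le_mul (hM n) (norm_ofTendstoZero_le hy zero_le_one hy1) (norm_nonneg _)
        ((norm_nonneg _).trans (hM n))
    _ = M := mul_one M

lemma tendsto_column_of_forall_tendsto (T : ℕ → ℕ → ℝ)
    (h : ∀ y : ℕ → ℝ, Tendsto y atTop (𝓝 0) → ∃ l, Tendsto (matTransform T y) atTop (𝓝 l))
    (k : ℕ) : ∃ l, Tendsto (fun n => T n k) atTop (𝓝 l) := by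
  have hsingle : Tendsto (Pi.single k (1 : ℝ)) atTop (𝓝 0) :=
    tendsto_const_nhds.congr' <| (eventually_gt_atTop k).mono fun j hj => by
      simp [hj.ne']
  obtain ⟨l, hl⟩ := h _ hsingle
  exact ⟨l, hl.congr' <| (eventually_ge_atTop k).mono fun n hn => matTransform_single T hn⟩

lemma summable_abs_of_tendsto_column {T : ℕ → ℕ → ℝ} {M : ℝ}
    (hM : ∀ n, ∑ k ∈ range (n + 1), |T n k| ≤ M) {l : ℕ → ℝ}
    (hl : ∀ k, Tendsto (fun n => T n k) atTop (𝓝 (l k))) : Summable fun k => |l k| := by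
  refine summable_of_sum_range_le (c := M) (fun k => abs_nonneg _) fun J => ?_
  refine le_of_tendsto (tendsto_finsetSum _ fun k _ => (hl k).abs) ?_
  filter_upwards [eventually_ge_atTop J] with n hn
  calc ∑ k ∈ range J, |T n k| ≤ ∑ k ∈ range (n + 1), |T n k| :=
        sum_le_sum_of_subset_of_nonneg (range_subset_range.mpr (by omega))
          fun k _ _ => abs_nonneg _
    _ ≤ M := hM n

lemma tendsto_matTransform_of_bounded_of_tendsto_column {T : ℕ → ℕ → ℝ} {M : ℝ}
    (hM : ∀ n, ∑ k ∈ range (n + 1), |T n k| ≤ M) {l : ℕ → ℝ}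
    (hl : ∀ k, Tendsto (fun n => T n k) atTop (𝓝 (l k))) {y : ℕ → ℝ}
    (hy : Tendsto y atTop (𝓝 0)) :
    Tendsto (matTransform T y) atTop (𝓝 (∑' k, l k * y k)) := by
  have hM0 : 0 ≤ M := (sum_nonneg fun k _ => abs_nonneg _).trans (hM 0)
  obtain ⟨B, hB⟩ := (by simpa using hy.abs : Tendsto (|y ·|) atTop (𝓝 0)).bddAbove_range
  have hsum : Summable fun k => l k * y k :=
    ((summable_abs_of_tendsto_column hM hl).mul_right B).of_norm_bounded fun k => by
      rw [Real.norm_eq_abs, abs_mul]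
      exact mul_le_mul_of_nonneg_left (hB ⟨k, rfl⟩) (abs_nonneg _)
  set trunc : ℕ → ℕ → ℝ := fun J k => if k < J then y k else 0
  have htail : ∀ δ > 0, ∀ᶠ J in atTop, ∀ n,
      |matTransform T y n - matTransform T (trunc J) n| ≤ M * δ := fun δ hδ => by
    obtain ⟨J₀, hJ₀⟩ := Metric.tendsto_atTop.mp hy δ hδ
    filter_upwards [eventually_ge_atTop J₀] with J hJ n
    rw [matTransform_sub]
    refine (abs_matTransform_le T (fun k => ?_) n).trans (by gcongr; exact hM n)
    by_cases hk : k < J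
    · simp [trunc, hk, hδ.le]
    · simpa [trunc, hk] using (hJ₀ k (hJ.trans (not_lt.mp hk))).le
  refine TendstoUniformly.tendsto_of_eventually_tendsto
    (F := fun J => matTransform T (trunc J)) (L := fun J => ∑ k ∈ range J, l k * y k) ?_
    (Eventually.of_forall fun J => ?_) hsum.hasSum.tendsto_sum_nat
  · refine Metric.tendstoUniformly_iff.mpr fun ε hε => ?_
    have hδ : 0 < ε / (M + 1) := by positivity
    filter_upwards [htail _ hδ] with J hJ n
    calc dist (matTransform T y n) (matTransform T (trunc J) n) ≤ M * (ε / (M + 1)) := hJ n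
      _ < ε := by rw [mul_div_assoc', div_lt_iff₀ (by positivity)]; nlinarith
  · refine (tendsto_finsetSum _ fun k _ => (hl k).mul_const (y k)).congr' ?_
    filter_upwards [eventually_ge_atTop J] with n hn
    rw [matTransform, ← sum_range_add_sum_Ico _ (by omega : J ≤ n + 1)]
    have hlow : ∀ k ∈ range J, T n k * trunc J k = T n k * y k := fun k hk => by
      simp [trunc, mem_range.mp hk]
    have hhigh : ∀ k ∈ Ico J (n + 1), T n k * trunc J k = 0 := fun k hk => by
      simp [trunc, (mem_Ico.mp hk).1]
    rw [sum_congr rfl hlow, sum_eq_zero hhigh, add_zero]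

theorem exists_tendsto_matTransform_iff (T : ℕ → ℕ → ℝ) :
    (∀ y : ℕ → ℝ, Tendsto y atTop (𝓝 0) → ∃ l, Tendsto (matTransform T y) atTop (𝓝 l)) ↔
      (∃ M, ∀ n, ∑ k ∈ range (n + 1), |T n k| ≤ M) ∧
        ∀ k, ∃ l, Tendsto (fun n => T n k) atTop (𝓝 l) := by
  refine ⟨fun h => ⟨exists_sum_abs_le_of_forall_tendsto T h, tendsto_column_of_forall_tendsto T h⟩,
    fun ⟨⟨M, hM⟩, hcol⟩ y hy => ?_⟩
  choose l hl using hcol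
  exact ⟨_, tendsto_matTransform_of_bounded_of_tendsto_column hM hl hy⟩

theorem beta_dual_c0_general (r s α : ℝ) (lam : ℕ → ℝ)
    (C : ℕ → ℕ → ℝ) (hCtri : ∀ n k : ℕ, n < k → C n k = 0)
    (hAC : ∀ n k : ℕ, (∑ i ∈ Finset.range (max n k + 1), Amat r s α lam n i * C i k)
        = if n = k then 1 else 0)
    (hCA : ∀ n k : ℕ, (∑ i ∈ Finset.range (max n k + 1), C n i * Amat r s α lam i k)
        = if n = k then 1 else 0)
    (d : ℕ → ℝ) :
    (∀ x : ℕ → ℝ, Tendsto (Atr r s α lam x) atTop (nhds 0) →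
        ∃ l : ℝ, Tendsto (fun n => ∑ k ∈ Finset.range (n + 1), d k * x k) atTop (nhds l)) ↔
      ((∃ M : ℝ, ∀ n, (∑ k ∈ Finset.range (n + 1), |tmat d C n k|) ≤ M) ∧
        (∀ k, ∃ l : ℝ, Tendsto (fun n => tmat d C n k) atTop (nhds l))) := by
  have hAC' : ∀ y, Atr r s α lam (matTransform C y) = y :=
    matTransform_matTransform_of_mul_eq_one hCtri fun n k hk => by
      simpa only [max_eq_left hk] using hAC n k
  have hCA' : ∀ x, matTransform C (Atr r s α lam x) = x :=
    matTransform_matTransform_of_mul_eq_one (fun _ _ => Amat_eq_zero_of_lt r s α lam)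
      fun n k hk => by simpa only [max_eq_left hk] using hCA n k
  rw [← exists_tendsto_matTransform_iff]
  constructor
  · intro h y hy
    obtain ⟨l, hl⟩ := h (matTransform C y) (by rwa [hAC'])
    exact ⟨l, by simpa only [sum_range_mul_matTransform d hCtri] using hl⟩
  · intro h x hx
    obtain ⟨l, hl⟩ := h _ hx
    refine ⟨l, hl.congr fun n => ?_⟩
    rw [← sum_range_mul_matTransform d hCtri, hCA']

/-- `d` belongs to the β-dual of `{x : Ax ∈ c₀}` — i.e. the partial
sums `Σ_{k=0}^{n} d_k·x_k` converge for every `x` with `(Ax)_n → 0` — iff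
`sup_n Σ_{k=0}^{n} |t(n,k)| < ∞` and `lim_n t(n,k)` exists for each `k`. -/
theorem beta_dual_c0 (r s α : ℝ) (lam : ℕ → ℝ)
    (hr : r ≠ 0) (hsr : s + r ≠ 0) (hα : 0 < α) (hαint : ∀ m : ℤ, α ≠ (m : ℝ))
    (hlam0 : 0 < lam 0) (hmono : StrictMono lam) (hlam : Tendsto lam atTop atTop)
    (C : ℕ → ℕ → ℝ) (hCtri : ∀ n k : ℕ, n < k → C n k = 0)
    (hAC : ∀ n k : ℕ, (∑ i ∈ Finset.range (max n k + 1), Amat r s α lam n i * C i k)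
        = if n = k then 1 else 0)
    (hCA : ∀ n k : ℕ, (∑ i ∈ Finset.range (max n k + 1), C n i * Amat r s α lam i k)
        = if n = k then 1 else 0)
    (d : ℕ → ℝ) :
    (∀ x : ℕ → ℝ, Tendsto (Atr r s α lam x) atTop (nhds 0) →
        ∃ l : ℝ, Tendsto (fun n => ∑ k ∈ Finset.range (n + 1), d k * x k) atTop (nhds l)) ↔
      ((∃ M : ℝ, ∀ n, (∑ k ∈ Finset.range (n + 1), |tmat d C n k|) ≤ M) ∧
        (∀ k, ∃ l : ℝ, Tendsto (fun n => tmat d C n k) atTop (nhds l))) :=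
  beta_dual_c0_general r s α lam C hCtri hAC hCA d
end
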